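/- arXiv:0902.1571 — 6 statements merged into one kernel-verified Lean document; each statement's English description precedes it below -/
import Mathlib

section
/- Let α ∈ 𝔻 and define the Möbius transformations T_+(z,α)(w) = (w − α)/(−z·conj(α)·w + z) and T_-(z,α)(w) = (z·w − conj(α))/(−z·α·w + 1). Then: (1) if z ∈ ∂𝔻, both T_+(z,α) and T_-(z,α) are holomorphic automorphisms of 𝔻, and in particular γ(T_±(z,α)(w₁), T_±(z,α)(w₂)) = γ(w₁, w₂) for all w₁, w₂ ∈ 𝔻; (2) if z ∈ 𝔻, then T_-(z,α) maps 𝔻 into 𝔻 and γ(T_-(z,α)(w₁), T_-(z,α)(w₂)) ≤ |z|·γ(w₁, w₂) for all w₁, w₂ ∈ 𝔻. -/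
open MeasureTheory Filter Metric Complex Set Topology

noncomputable section

/-- A Schur function: analytic on the open unit disc with modulus bounded by one. -/
def IsSchur (f : ℂ → ℂ) : Prop :=
  DifferentiableOn ℂ f (ball (0:ℂ) 1) ∧ ∀ z ∈ ball (0:ℂ) 1, ‖f z‖ ≤ 1

/-- `f` is the Schur function whose Schur parameter sequence is `α`; the Schur
algorithm recursion is imposed at every step whose parameter has modulus `< 1`
(at a parameter of modulus one the algorithm terminates, and indeed the condition
`g n 0 = α n` with `g n` Schur then forces `g n` to be the constant `α n`). -/
def HasSchurParams (f : ℂ → ℂ) (α : ℕ → ℂ) : Prop :=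
  ∃ g : ℕ → ℂ → ℂ, g 0 = f ∧ (∀ n, IsSchur (g n)) ∧ (∀ n, g n 0 = α n) ∧
    ∀ n, ‖α n‖ < 1 → ∀ z ∈ ball (0:ℂ) 1,
      z * g (n+1) z * (1 - (starRingEnd ℂ) (α n) * g n z) = g n z - α n

/-- The radial limit of `f` at the boundary point `z` equals `L`. -/
def RadialLimit (f : ℂ → ℂ) (z L : ℂ) : Prop :=
  Tendsto (fun r : ℝ => f ((r : ℂ) * z)) (nhdsWithin 1 (Set.Iio 1)) (𝓝 L)

/-- The set of angles `θ ∈ [0, 2π)` whose corresponding point `e^{iθ}` lies in `S ⊆ ∂𝔻`. -/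
def circleSet (S : Set ℂ) : Set ℝ :=
  {θ : ℝ | θ ∈ Set.Ico 0 (2 * Real.pi) ∧ Complex.exp (θ * Complex.I) ∈ S}

/-- Harmonic measure `ω_z(S)` of a Borel set `S ⊆ ∂𝔻` at `z ∈ 𝔻`. -/
def omega (z : ℂ) (S : Set ℂ) : ℝ :=
  ∫ θ in circleSet S,
    ((Complex.exp (θ * Complex.I) + z) / (Complex.exp (θ * Complex.I) - z)).re / (2 * Real.pi)

/-- The radial boundary value `ω_{f(e^{iθ})}(S) = lim_{r↑1} ω_{f(re^{iθ})}(S)`. -/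
def omegaBdry (f : ℂ → ℂ) (S : Set ℂ) (θ : ℝ) : ℝ :=
  limUnder (nhdsWithin (1:ℝ) (Set.Iio 1))
    (fun r : ℝ => omega (f ((r:ℂ) * Complex.exp (θ * Complex.I))) S)

/-- The reversed (Szegő) polynomial `P*(z) = z^n conj(P(1/conj z))` of a degree-`n` polynomial. -/
def szegoRev (n : ℕ) (P : Polynomial ℂ) : Polynomial ℂ :=
  (P.map (starRingEnd ℂ)).reflect n

/-- `α` is the Verblunsky coefficient sequence of the measure `μ` on the unit circle
(parametrized by `θ ∈ [0,2π)`): `Φ` are the monic orthogonal polynomials obtained by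
Gram–Schmidt from `1, z, z², …` in `L²(∂𝔻, dμ)` and the Szegő recursion
`Φ_{n+1}(z) = z Φ_n(z) - conj(α_n) Φ_n*(z)` holds. -/
def IsVerblunsky (μ : Measure ℝ) (Φ : ℕ → Polynomial ℂ) (α : ℕ → ℂ) : Prop :=
  (∀ n, (Φ n).Monic) ∧ (∀ n, (Φ n).natDegree = n) ∧
  (∀ n m : ℕ, m < n →
    ∫ θ, (Φ n).eval (Complex.exp (θ * Complex.I)) *
      (starRingEnd ℂ) (Complex.exp (θ * Complex.I)) ^ m ∂μ = 0) ∧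
  (∀ n, ‖α n‖ < 1) ∧
  (∀ n, Φ (n + 1) =
    Polynomial.X * Φ n - Polynomial.C ((starRingEnd ℂ) (α n)) * szegoRev n (Φ n))

/-- `β : ℤ → ℂ` is a right limit of the half-line sequence `α`. -/
def IsRightLimit (α : ℕ → ℂ) (β : ℤ → ℂ) : Prop :=
  ∃ nj : ℕ → ℕ, Tendsto nj atTop atTop ∧
    ∀ n : ℤ, Tendsto (fun j => α (n + nj j).toNat) atTop (𝓝 (β n))

/-- The `L²(μ)` norm of the boundary values of the polynomial `P`. -/
def opucNorm (μ : Measure ℝ) (P : Polynomial ℂ) : ℝ :=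
  Real.sqrt (∫ θ, ‖P.eval (Complex.exp (θ * Complex.I))‖ ^ 2 ∂μ)

/-- The measure `|φ|² dμ`, where `φ = P / ‖P‖_{L²(μ)}` is the normalized polynomial. -/
def diagMeasure (μ : Measure ℝ) (P : Polynomial ℂ) : Measure ℝ :=
  μ.withDensity (fun θ => ENNReal.ofReal
    (‖P.eval (Complex.exp (θ * Complex.I)) / ((opucNorm μ P : ℝ) : ℂ)‖ ^ 2))


/-- The pseudohyperbolic distance on the unit disc. -/
def pseudoDist (w₁ w₂ : ℂ) : ℝ :=
  ‖w₁ - w₂‖ /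
    (Real.sqrt (1 - ‖w₁‖ ^ 2) * Real.sqrt (1 - ‖w₂‖ ^ 2))

/-- The Möbius transformation `T₊(z,γ)` with coefficient matrix `[[1, -γ], [-z conj γ, z]]`. -/
def Tplus (z γ w : ℂ) : ℂ := (w - γ) / (-z * (starRingEnd ℂ) γ * w + z)

/-- The Möbius transformation `T₋(z,γ)` with coefficient matrix `[[z, -conj γ], [-z γ, 1]]`. -/
def Tminus (z γ w : ℂ) : ℂ := (z * w - (starRingEnd ℂ) γ) / (-z * γ * w + 1)

/-!
For `‖a‖ < 1` the Blaschke factor `w ↦ (w - a) / (1 - conj a * w)` maps the disc onto itself,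
with inverse the factor at `-a`, and it preserves the pseudohyperbolic distance because of the
identity `‖1 - conj a * w‖² - ‖w - a‖² = (1 - ‖a‖²)(1 - ‖w‖²)`. `T₊(z,γ)` is the factor at `γ`
followed by `w ↦ z⁻¹ w`, and `T₋(z,γ)` is `w ↦ z w` followed by the factor at `conj γ`. For
`‖z‖ = 1` the scaling is a rotation, hence an isometry; for `‖z‖ < 1` it multiplies
`‖w₁ - w₂‖` by `‖z‖` and can only increase the weights `1 - ‖w‖²`.
-/

open ComplexConjugate

def blaschkeFactor (a w : ℂ) : ℂ := (w - a) / (1 - conj a * w)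

lemma one_sub_conj_mul_ne_zero {a w : ℂ} (ha : ‖a‖ < 1) (hw : ‖w‖ ≤ 1) :
    1 - conj a * w ≠ 0 := by
  refine sub_ne_zero.2 fun h => ?_
  have : ‖conj a * w‖ < 1 := by
    rw [norm_mul, Complex.norm_conj]
    exact mul_lt_one_of_nonneg_of_lt_one_left (norm_nonneg a) ha hw
  simp [← h] at this

lemma norm_one_sub_conj_mul_sq_sub_norm_sub_sq (a w : ℂ) :
    ‖1 - conj a * w‖ ^ 2 - ‖w - a‖ ^ 2 = (1 - ‖a‖ ^ 2) * (1 - ‖w‖ ^ 2) := by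
  simp only [Complex.sq_norm, Complex.normSq_apply, Complex.sub_re, Complex.sub_im,
    Complex.one_re, Complex.one_im, Complex.mul_re, Complex.mul_im, Complex.conj_re,
    Complex.conj_im]
  ring

lemma one_sub_norm_blaschkeFactor_sq {a w : ℂ} (ha : ‖a‖ < 1) (hw : ‖w‖ < 1) :
    1 - ‖blaschkeFactor a w‖ ^ 2 = (1 - ‖a‖ ^ 2) * (1 - ‖w‖ ^ 2) / ‖1 - conj a * w‖ ^ 2 := by
  have hd : ‖1 - conj a * w‖ ≠ 0 := norm_ne_zero_iff.2 (one_sub_conj_mul_ne_zero ha hw.le)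
  rw [← norm_one_sub_conj_mul_sq_sub_norm_sub_sq, blaschkeFactor, norm_div, div_pow,
    one_sub_div (pow_ne_zero 2 hd)]

lemma norm_blaschkeFactor_lt_one {a w : ℂ} (ha : ‖a‖ < 1) (hw : ‖w‖ < 1) :
    ‖blaschkeFactor a w‖ < 1 := by
  have : 0 < 1 - ‖a‖ ^ 2 := by nlinarith [norm_nonneg a]
  have : 0 < 1 - ‖w‖ ^ 2 := by nlinarith [norm_nonneg w]
  have hpos : 0 < 1 - ‖blaschkeFactor a w‖ ^ 2 := by
    rw [one_sub_norm_blaschkeFactor_sq ha hw]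
    have := norm_pos_iff.2 (one_sub_conj_mul_ne_zero ha hw.le)
    positivity
  nlinarith [norm_nonneg (blaschkeFactor a w)]

lemma sqrt_one_sub_norm_blaschkeFactor_sq {a w : ℂ} (ha : ‖a‖ < 1) (hw : ‖w‖ < 1) :
    √(1 - ‖blaschkeFactor a w‖ ^ 2) = √(1 - ‖a‖ ^ 2) * √(1 - ‖w‖ ^ 2) / ‖1 - conj a * w‖ := by
  rw [one_sub_norm_blaschkeFactor_sq ha hw, Real.sqrt_div' _ (sq_nonneg _),
    Real.sqrt_sq (norm_nonneg _), Real.sqrt_mul (by nlinarith [norm_nonneg a])]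

lemma blaschkeFactor_sub_blaschkeFactor {a w₁ w₂ : ℂ} (h₁ : 1 - conj a * w₁ ≠ 0)
    (h₂ : 1 - conj a * w₂ ≠ 0) :
    blaschkeFactor a w₁ - blaschkeFactor a w₂ =
      (1 - conj a * a) * (w₁ - w₂) / ((1 - conj a * w₁) * (1 - conj a * w₂)) := by
  rw [blaschkeFactor, blaschkeFactor, div_sub_div _ _ h₁ h₂]
  ring

lemma norm_blaschkeFactor_sub_blaschkeFactor {a w₁ w₂ : ℂ} (ha : ‖a‖ ≤ 1)
    (h₁ : 1 - conj a * w₁ ≠ 0) (h₂ : 1 - conj a * w₂ ≠ 0) :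
    ‖blaschkeFactor a w₁ - blaschkeFactor a w₂‖ =
      (1 - ‖a‖ ^ 2) * ‖w₁ - w₂‖ / (‖1 - conj a * w₁‖ * ‖1 - conj a * w₂‖) := by
  have : (1 : ℂ) - conj a * a = ((1 - ‖a‖ ^ 2 : ℝ) : ℂ) := by
    rw [Complex.conj_mul']
    push_cast
    rfl
  rw [blaschkeFactor_sub_blaschkeFactor h₁ h₂, norm_div, norm_mul, norm_mul, this,
    Complex.norm_of_nonneg (by nlinarith [norm_nonneg a])]

lemma pseudoDist_blaschkeFactor {a w₁ w₂ : ℂ} (ha : ‖a‖ < 1) (h₁ : ‖w₁‖ < 1) (h₂ : ‖w₂‖ < 1) :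
    pseudoDist (blaschkeFactor a w₁) (blaschkeFactor a w₂) = pseudoDist w₁ w₂ := by
  have hd₁ := one_sub_conj_mul_ne_zero ha h₁.le
  have hd₂ := one_sub_conj_mul_ne_zero ha h₂.le
  have ha' : 0 < 1 - ‖a‖ ^ 2 := by nlinarith [norm_nonneg a]
  rw [pseudoDist, pseudoDist, norm_blaschkeFactor_sub_blaschkeFactor ha.le hd₁ hd₂,
    sqrt_one_sub_norm_blaschkeFactor_sq ha h₁, sqrt_one_sub_norm_blaschkeFactor_sq ha h₂,
    div_mul_div_comm, div_div_div_cancel_right₀ (mul_ne_zero (norm_ne_zero_iff.2 hd₁)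
      (norm_ne_zero_iff.2 hd₂)), mul_mul_mul_comm, Real.mul_self_sqrt ha'.le,
    mul_div_mul_left _ _ ha'.ne']

lemma blaschkeFactor_neg_blaschkeFactor {a w : ℂ} (ha : ‖a‖ < 1) (hw : ‖w‖ ≤ 1) :
    blaschkeFactor (-a) (blaschkeFactor a w) = w := by
  have hd := one_sub_conj_mul_ne_zero ha hw
  have ha' := one_sub_conj_mul_ne_zero ha ha.le
  have hnum : (w - a) / (1 - conj a * w) + a = w * (1 - conj a * a) / (1 - conj a * w) := by
    rw [eq_div_iff hd, add_mul, div_mul_cancel₀ _ hd]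
    ring
  have hden : 1 + conj a * ((w - a) / (1 - conj a * w)) =
      (1 - conj a * a) / (1 - conj a * w) := by
    rw [eq_div_iff hd, add_mul, mul_assoc, div_mul_cancel₀ _ hd]
    ring
  rw [blaschkeFactor, blaschkeFactor, map_neg, sub_neg_eq_add, neg_mul, sub_neg_eq_add, hnum,
    hden, div_div_div_cancel_right₀ hd, mul_div_cancel_right₀ _ ha']

lemma mapsTo_blaschkeFactor {a : ℂ} (ha : ‖a‖ < 1) :
    MapsTo (blaschkeFactor a) (ball 0 1) (ball 0 1) := fun _ hw => by
  rw [mem_ball_zero_iff] at hw ⊢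
  exact norm_blaschkeFactor_lt_one ha hw

lemma bijOn_blaschkeFactor {a : ℂ} (ha : ‖a‖ < 1) :
    BijOn (blaschkeFactor a) (ball 0 1) (ball 0 1) := by
  have ha' : ‖-a‖ < 1 := by rwa [norm_neg]
  refine InvOn.bijOn ⟨fun w hw => ?_, fun w hw => ?_⟩ (mapsTo_blaschkeFactor ha)
    (mapsTo_blaschkeFactor ha')
  · exact blaschkeFactor_neg_blaschkeFactor ha (mem_ball_zero_iff.1 hw).le
  · simpa using blaschkeFactor_neg_blaschkeFactor ha' (mem_ball_zero_iff.1 hw).le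

lemma differentiableOn_blaschkeFactor {a : ℂ} (ha : ‖a‖ < 1) :
    DifferentiableOn ℂ (blaschkeFactor a) (ball 0 1) :=
  DifferentiableOn.div (by fun_prop) (by fun_prop) fun _ hw =>
    one_sub_conj_mul_ne_zero ha (mem_ball_zero_iff.1 hw).le

lemma mapsTo_mul_ball {z : ℂ} (hz : ‖z‖ ≤ 1) : MapsTo (z * ·) (ball 0 1) (ball 0 1) :=
  fun w hw => by
    rw [mem_ball_zero_iff] at hw ⊢
    rw [norm_mul]
    exact mul_lt_one_of_nonneg_of_lt_one_right hz (norm_nonneg w) hw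

lemma bijOn_mul_ball {u : ℂ} (hu : ‖u‖ = 1) : BijOn (u * ·) (ball 0 1) (ball 0 1) := by
  have hu₀ : u ≠ 0 := norm_ne_zero_iff.1 (by rw [hu]; exact one_ne_zero)
  refine InvOn.bijOn ⟨fun w _ => ?_, fun w _ => ?_⟩ (mapsTo_mul_ball hu.le)
    (mapsTo_mul_ball (by rw [norm_inv, hu, inv_one]) : MapsTo (u⁻¹ * ·) _ _)
  · simp [hu₀]
  · simp [hu₀]

lemma pseudoDist_mul_of_norm_eq_one {u : ℂ} (hu : ‖u‖ = 1) (w₁ w₂ : ℂ) :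
    pseudoDist (u * w₁) (u * w₂) = pseudoDist w₁ w₂ := by
  simp only [pseudoDist, ← mul_sub, norm_mul, hu, one_mul]

lemma pseudoDist_mul_le {z w₁ w₂ : ℂ} (hz : ‖z‖ ≤ 1) (h₁ : ‖w₁‖ < 1) (h₂ : ‖w₂‖ < 1) :
    pseudoDist (z * w₁) (z * w₂) ≤ ‖z‖ * pseudoDist w₁ w₂ := by
  have hzw₁ : ‖z * w₁‖ ≤ ‖w₁‖ := by
    rw [norm_mul]; exact mul_le_of_le_one_left (norm_nonneg _) hz
  have hzw₂ : ‖z * w₂‖ ≤ ‖w₂‖ := by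
    rw [norm_mul]; exact mul_le_of_le_one_left (norm_nonneg _) hz
  have : 0 < √(1 - ‖w₁‖ ^ 2) := Real.sqrt_pos.2 (by nlinarith [norm_nonneg w₁])
  have : 0 < √(1 - ‖w₂‖ ^ 2) := Real.sqrt_pos.2 (by nlinarith [norm_nonneg w₂])
  rw [pseudoDist, pseudoDist, ← mul_sub, norm_mul, mul_div_assoc]
  gcongr

lemma Tplus_eq (z γ : ℂ) : Tplus z γ = fun w => z⁻¹ * blaschkeFactor γ w := by
  ext w
  rw [Tplus, blaschkeFactor, show -z * conj γ * w + z = (1 - conj γ * w) * z by ring, ← div_div,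
    div_eq_inv_mul]

lemma Tminus_eq (z γ : ℂ) : Tminus z γ = fun w => blaschkeFactor (conj γ) (z * w) := by
  ext w
  rw [Tminus, blaschkeFactor, Complex.conj_conj]
  ring

theorem statement10 (γ : ℂ) (hγ : ‖γ‖ < 1) :
    (∀ z ∈ sphere (0:ℂ) 1,
      (DifferentiableOn ℂ (Tplus z γ) (ball (0:ℂ) 1) ∧
        Set.BijOn (Tplus z γ) (ball (0:ℂ) 1) (ball (0:ℂ) 1) ∧
        ∀ w₁ ∈ ball (0:ℂ) 1, ∀ w₂ ∈ ball (0:ℂ) 1,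
          pseudoDist (Tplus z γ w₁) (Tplus z γ w₂) = pseudoDist w₁ w₂) ∧
      (DifferentiableOn ℂ (Tminus z γ) (ball (0:ℂ) 1) ∧
        Set.BijOn (Tminus z γ) (ball (0:ℂ) 1) (ball (0:ℂ) 1) ∧
        ∀ w₁ ∈ ball (0:ℂ) 1, ∀ w₂ ∈ ball (0:ℂ) 1,
          pseudoDist (Tminus z γ w₁) (Tminus z γ w₂) = pseudoDist w₁ w₂)) ∧
    (∀ z ∈ ball (0:ℂ) 1,
      Set.MapsTo (Tminus z γ) (ball (0:ℂ) 1) (ball (0:ℂ) 1) ∧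
      ∀ w₁ ∈ ball (0:ℂ) 1, ∀ w₂ ∈ ball (0:ℂ) 1,
        pseudoDist (Tminus z γ w₁) (Tminus z γ w₂) ≤ ‖z‖ * pseudoDist w₁ w₂) := by
  have hγ' : ‖conj γ‖ < 1 := by rwa [Complex.norm_conj]
  refine ⟨fun z hz => ?_, fun z hz => ?_⟩
  · have hz : ‖z‖ = 1 := mem_sphere_zero_iff_norm.1 hz
    have hz' : ‖z⁻¹‖ = 1 := by rw [norm_inv, hz, inv_one]
    have hzw {w : ℂ} (hw : w ∈ ball (0 : ℂ) 1) : ‖z * w‖ < 1 :=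
      mem_ball_zero_iff.1 (mapsTo_mul_ball hz.le hw)
    rw [Tplus_eq, Tminus_eq]
    refine ⟨⟨(differentiableOn_blaschkeFactor hγ).const_mul _,
        (bijOn_mul_ball hz').comp (bijOn_blaschkeFactor hγ), fun w₁ h₁ w₂ h₂ => ?_⟩,
      (differentiableOn_blaschkeFactor hγ').comp (by fun_prop) (mapsTo_mul_ball hz.le),
        (bijOn_blaschkeFactor hγ').comp (bijOn_mul_ball hz), fun w₁ h₁ w₂ h₂ => ?_⟩
    · rw [pseudoDist_mul_of_norm_eq_one hz', pseudoDist_blaschkeFactor hγ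
        (mem_ball_zero_iff.1 h₁) (mem_ball_zero_iff.1 h₂)]
    · rw [pseudoDist_blaschkeFactor hγ' (hzw h₁) (hzw h₂), pseudoDist_mul_of_norm_eq_one hz]
  · have hz : ‖z‖ ≤ 1 := (mem_ball_zero_iff.1 hz).le
    rw [Tminus_eq]
    refine ⟨(mapsTo_blaschkeFactor hγ').comp (mapsTo_mul_ball hz), fun w₁ h₁ w₂ h₂ => ?_⟩
    rw [pseudoDist_blaschkeFactor hγ' (mem_ball_zero_iff.1 (mapsTo_mul_ball hz h₁))
      (mem_ball_zero_iff.1 (mapsTo_mul_ball hz h₂))]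
    exact pseudoDist_mul_le hz (mem_ball_zero_iff.1 h₁) (mem_ball_zero_iff.1 h₂)
end
end

section
/- Let (α_n)_{n∈ℤ} and (β_n)_{n∈ℤ} be two doubly infinite sequences of Verblunsky coefficients (|α_n| ≤ 1, |β_n| ≤ 1) such that their associated whole-line CMV matrices are both reflectionless on a common Borel set A ⊆ ∂𝔻 of positive Lebesgue measure. If α_n = β_n for all n < 0, then α_n = β_n for all n ∈ ℤ. -/
open MeasureTheory Filter Metric Complex Set Topology

noncomputable section

/-!
Induction on `n`. If `α` and `β` agree below `n`, the two functions `f₋(·, n)` have the same Schur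
parameters and therefore coincide: near `0` the inverse Schur step `w ↦ (γ + w) / (1 + γ̄ w)` is a
contraction, so the first `N` parameters pin a Schur function down to `O((4/9)^N)` on `‖z‖ ≤ 1/4`.
Reflectionlessness on `A` then forces the radial limits of the two functions `f₊(·, n)` to agree
a.e. on `A`. Their difference is a bounded analytic function with radial limit `0` on a set of
positive measure, so by Jensen's inequality on circles of radius `r ↑ 1` (and dominated
convergence) `log ‖f₊α(0, n) - f₊β(0, n)‖ = -∞`, i.e. `α n = f₊α(0, n) = f₊β(0, n) = β n`.
-/

open scoped ComplexConjugate Real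

theorem IsSchur.eqOn_const_of_one_le_norm {f : ℂ → ℂ} (hf : IsSchur f) (h : 1 ≤ ‖f 0‖) :
    EqOn f (fun _ ↦ f 0) (ball 0 1) :=
  Complex.eqOn_of_isPreconnected_of_isMaxOn_norm (convex_ball (0:ℂ) 1).isPreconnected
    isOpen_ball hf.1 (mem_ball_self one_pos) fun z hz ↦ (hf.2 z hz).trans h

/-- `hx` is the Schur recursion solved for `x = f z`, with `w = z * f₁ z`. -/
theorem norm_sub_le_of_schur_step {a x x' w w' : ℂ} (ha : ‖a‖ ≤ 1) (hw : ‖w‖ ≤ 1 / 4)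
    (hw' : ‖w'‖ ≤ 1 / 4) (hx : x * (1 + conj a * w) = a + w)
    (hx' : x' * (1 + conj a * w') = a + w') :
    ‖x - x'‖ ≤ 16 / 9 * ‖w - w'‖ := by
  have hden : ∀ v : ℂ, ‖v‖ ≤ 1 / 4 → 3 / 4 ≤ ‖1 + conj a * v‖ := fun v hv ↦ by
    have hav : ‖conj a * v‖ ≤ 1 / 4 := by
      rw [norm_mul, Complex.norm_conj]
      nlinarith [norm_nonneg a, norm_nonneg v]
    have := norm_sub_norm_le (1 : ℂ) (-(conj a * v))
    rw [norm_neg, sub_neg_eq_add, norm_one] at this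
    linarith
  have hnum : ‖1 - a * conj a‖ ≤ 1 := by
    rw [Complex.mul_conj, ← Complex.ofReal_one, ← Complex.ofReal_sub, Complex.norm_real,
      Real.norm_eq_abs, abs_le, Complex.normSq_eq_norm_sq]
    constructor <;> nlinarith [norm_nonneg a]
  have hkey : ‖x - x'‖ * (‖1 + conj a * w‖ * ‖1 + conj a * w'‖)
      = ‖w - w'‖ * ‖1 - a * conj a‖ := by
    simp only [← norm_mul]
    congr 1
    linear_combination (1 + conj a * w') * hx - (1 + conj a * w) * hx'
  have h1 := hden w hw
  have h2 := hden w' hw'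
  have : ‖x - x'‖ * (9 / 16) ≤ ‖w - w'‖ := by
    calc ‖x - x'‖ * (9 / 16) ≤ ‖x - x'‖ * (‖1 + conj a * w‖ * ‖1 + conj a * w'‖) := by
          gcongr; nlinarith
      _ = ‖w - w'‖ * ‖1 - a * conj a‖ := hkey
      _ ≤ ‖w - w'‖ := mul_le_of_le_one_right (norm_nonneg _) hnum
  linarith

namespace HasSchurParams

variable {f f' : ℂ → ℂ} {a : ℕ → ℂ}

theorem isSchur (h : HasSchurParams f a) : IsSchur f := by
  obtain ⟨g, rfl, hg, -⟩ := h
  exact hg 0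

theorem apply_zero (h : HasSchurParams f a) : f 0 = a 0 := by
  obtain ⟨g, rfl, -, hg, -⟩ := h
  exact hg 0

theorem exists_tail (h : HasSchurParams f a) :
    ∃ g, HasSchurParams g (fun k ↦ a (k + 1)) ∧
      (‖a 0‖ < 1 → ∀ z ∈ ball (0:ℂ) 1, f z * (1 + conj (a 0) * (z * g z)) = a 0 + z * g z) := by
  obtain ⟨g, rfl, hS, h0, hrec⟩ := h
  refine ⟨g 1, ⟨fun n ↦ g (n + 1), rfl, fun n ↦ hS (n + 1), fun n ↦ h0 (n + 1),
    fun n ↦ hrec (n + 1)⟩, fun ha z hz ↦ ?_⟩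
  linear_combination -hrec 0 ha z hz

theorem norm_sub_apply_le (N : ℕ) (hf : HasSchurParams f a) (hf' : HasSchurParams f' a) {z : ℂ}
    (hz : ‖z‖ ≤ 1 / 4) :
    ‖f z - f' z‖ ≤ 2 * (4 / 9) ^ N := by
  have hzb : z ∈ ball (0:ℂ) 1 := mem_ball_zero_iff.2 (by linarith)
  induction N generalizing f f' a with
  | zero =>
    have := _root_.norm_sub_le (f z) (f' z)
    linarith [hf.isSchur.2 z hzb, hf'.isSchur.2 z hzb]
  | succ N ih =>
    obtain ⟨g, hg, hrec⟩ := hf.exists_tail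
    obtain ⟨g', hg', hrec'⟩ := hf'.exists_tail
    by_cases ha : ‖a 0‖ < 1
    · have hw : ∀ h : ℂ → ℂ, IsSchur h → ‖z * h z‖ ≤ 1 / 4 := fun h hh ↦ by
        rw [norm_mul]; nlinarith [norm_nonneg z, hh.2 z hzb, norm_nonneg (h z)]
      calc ‖f z - f' z‖ ≤ 16 / 9 * ‖z * g z - z * g' z‖ :=
            norm_sub_le_of_schur_step ha.le (hw _ hg.isSchur) (hw _ hg'.isSchur)
              (hrec ha z hzb) (hrec' ha z hzb)
        _ = 16 / 9 * (‖z‖ * ‖g z - g' z‖) := by rw [← mul_sub, norm_mul]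
        _ ≤ 16 / 9 * (1 / 4 * (2 * (4 / 9) ^ N)) := by
            gcongr
            exact ih hg hg'
        _ = 2 * (4 / 9) ^ (N + 1) := by ring
    · have h1 : 1 ≤ ‖f 0‖ := by rw [hf.apply_zero]; exact not_lt.1 ha
      have h1' : 1 ≤ ‖f' 0‖ := by rw [hf'.apply_zero]; exact not_lt.1 ha
      rw [hf.isSchur.eqOn_const_of_one_le_norm h1 hzb,
        hf'.isSchur.eqOn_const_of_one_le_norm h1' hzb, hf.apply_zero, hf'.apply_zero, sub_self,
        norm_zero]
      positivity

theorem eqOn (hf : HasSchurParams f a) (hf' : HasSchurParams f' a) :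
    EqOn f f' (ball 0 1) := by
  have hsmall : EqOn f f' (ball 0 (1 / 4)) := fun z hz ↦ by
    have hz : ‖z‖ ≤ 1 / 4 := (mem_ball_zero_iff.1 hz).le
    have hlim : Tendsto (fun N : ℕ ↦ 2 * (4 / 9 : ℝ) ^ N) atTop (𝓝 0) := by
      simpa using (tendsto_pow_atTop_nhds_zero_of_lt_one (r := (4 / 9 : ℝ)) (by norm_num)
        (by norm_num)).const_mul 2
    rw [← sub_eq_zero, ← norm_le_zero_iff]
    exact ge_of_tendsto' hlim fun N ↦ norm_sub_apply_le N hf hf' hz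
  exact (hf.isSchur.1.analyticOnNhd isOpen_ball).eqOn_of_preconnected_of_eventuallyEq
    (hf'.isSchur.1.analyticOnNhd isOpen_ball) (convex_ball (0:ℂ) 1).isPreconnected
    (mem_ball_self one_pos) (hsmall.eventuallyEq_of_mem (ball_mem_nhds 0 (by norm_num)))

end HasSchurParams

theorem log_norm_le_circleAverage_log_norm {f : ℂ → ℂ} {r : ℝ} (hr : 0 < r)
    (hf : AnalyticOnNhd ℂ f (closedBall 0 r)) (hf0 : f 0 ≠ 0) :
    Real.log ‖f 0‖ ≤ Real.circleAverage (fun z ↦ Real.log ‖f z‖) 0 r := by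
  have hf' : AnalyticOnNhd ℂ f (closedBall 0 |r|) := by rwa [abs_of_pos hr]
  rw [hf'.circleAverage_log_norm hr.ne' hf0]
  refine le_add_of_nonneg_left (finsum_nonneg fun u ↦ ?_)
  by_cases hu : u ∈ closedBall (0:ℂ) |r|
  · refine mul_nonneg (mod_cast MeromorphicOn.AnalyticOnNhd.divisor_nonneg hf' u) ?_
    rcases eq_or_ne u 0 with rfl | hu0
    · simp
    · apply Real.log_nonneg
      rw [zero_sub, norm_neg, ← div_eq_mul_inv, one_le_div (norm_pos_iff.2 hu0)]
      simpa [abs_of_pos hr] using hu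
  · simp [hu]

theorem DifferentiableOn.countable_setOf_eq_zero {f : ℂ → ℂ} {U : Set ℂ}
    (hf : DifferentiableOn ℂ f U) (hU : IsOpen U) (hUc : IsConnected U) {x : ℂ} (hx : x ∈ U)
    (hfx : f x ≠ 0) :
    {z ∈ U | f z = 0}.Countable := by
  have h := isDiscrete_of_codiscreteWithin
    ((hf.analyticOnNhd hU).preimage_zero_mem_codiscreteWithin hfx hx hUc)
  have hset : {z ∈ U | f z = 0} = f ⁻¹' {0} ∩ U := by ext; simp [and_comm]
  rw [hset]
  exact (HereditarilyLindelofSpace.isLindelof _).countable h.to_subtype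

theorem nhdsWithin_Iio_diff_neBot {S : Set ℝ} (hS : S.Countable) (a : ℝ) :
    (𝓝[Iio a \ S] a).NeBot := by
  rw [← mem_closure_iff_nhdsWithin_neBot, sdiff_eq, inter_comm]
  have h := (hS.dense_compl ℝ).open_subset_closure_inter (isOpen_Iio (a := a))
  rw [inter_comm] at h
  exact closure_minimal h isClosed_closure (by simp)

theorem norm_ofReal_mul_exp (r θ : ℝ) : ‖(r : ℂ) * exp (θ * I)‖ = |r| := by
  rw [norm_mul, Complex.norm_exp_ofReal_mul_I, Complex.norm_real, Real.norm_eq_abs, mul_one]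

theorem two_pi_mul_log_norm_le_integral {f : ℂ → ℂ} (hf : DifferentiableOn ℂ f (ball 0 1))
    (hf0 : f 0 ≠ 0) {r : ℝ} (hr : 0 < r) (hr1 : r < 1) :
    2 * π * Real.log ‖f 0‖ ≤ ∫ θ in Ico 0 (2 * π), Real.log ‖f (r * exp (θ * I))‖ := by
  have h := log_norm_le_circleAverage_log_norm hr
    ((hf.analyticOnNhd isOpen_ball).mono (closedBall_subset_ball hr1)) hf0
  simp only [Real.circleAverage_def, circleMap_zero, smul_eq_mul,
    intervalIntegral.integral_of_le Real.two_pi_pos.le, integral_Ioc_eq_integral_Ioo,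
    ← integral_Ico_eq_integral_Ioo] at h
  rwa [← le_inv_mul_iff₀ (by positivity)]

theorem log_max_le_posLog {x M ε : ℝ} (hx : 0 ≤ x) (hxM : x ≤ M) (hε : 0 < ε) (hε1 : ε ≤ 1) :
    Real.log (max x ε) ≤ Real.posLog M := by
  rw [Real.posLog_eq_log_max_one (hx.trans hxM)]
  exact Real.log_le_log (lt_max_of_lt_right hε)
    (max_le (le_max_of_le_right hxM) (le_max_of_le_left hε1))

theorem setIntegral_log_norm_le_setIntegral_log_max_add {u : ℝ → ℂ} (hu : Continuous u)
    (hu0 : ∀ θ, u θ ≠ 0) {M : ℝ} (hM : ∀ θ, ‖u θ‖ ≤ M) {E : Set ℝ} (hE : MeasurableSet E)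
    (hEsub : E ⊆ Ico 0 (2 * π)) {ε : ℝ} (hε : 0 < ε) (hε1 : ε ≤ 1) :
    ∫ θ in Ico 0 (2 * π), Real.log ‖u θ‖
      ≤ (∫ θ in E, Real.log (max ‖u θ‖ ε)) + 2 * π * Real.posLog M := by
  set v : ℝ → ℝ := fun θ ↦ Real.log (max ‖u θ‖ ε)
  have hv : Continuous v := (hu.norm.max continuous_const).log fun θ ↦ (lt_max_of_lt_right hε).ne'
  have hvM : ∀ θ, v θ ≤ Real.posLog M := fun θ ↦ log_max_le_posLog (norm_nonneg _) (hM θ) hε hε1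
  have hvi : IntegrableOn v (Ico 0 (2 * π)) := hv.integrableOn_Icc.mono_set Ico_subset_Icc_self
  have hlogi : IntegrableOn (fun θ ↦ Real.log ‖u θ‖) (Ico 0 (2 * π)) :=
    (hu.norm.log fun θ ↦ norm_ne_zero_iff.2 (hu0 θ)).integrableOn_Icc.mono_set Ico_subset_Icc_self
  have hrest : ∫ θ in Ico 0 (2 * π) \ E, v θ ≤ 2 * π * Real.posLog M := by
    calc ∫ θ in Ico 0 (2 * π) \ E, v θ ≤ ∫ _ in Ico 0 (2 * π) \ E, Real.posLog M :=
          setIntegral_mono_on (hvi.mono_set sdiff_subset) (integrableOn_const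
              ((measure_mono sdiff_subset).trans_lt measure_Ico_lt_top).ne)
            (measurableSet_Ico.diff hE) fun θ _ ↦ hvM θ
      _ ≤ 2 * π * Real.posLog M := by
          rw [setIntegral_const, smul_eq_mul]
          gcongr
          · exact Real.posLog_nonneg
          · calc volume.real (Ico 0 (2 * π) \ E) ≤ volume.real (Ico 0 (2 * π)) :=
                  measureReal_mono sdiff_subset measure_Ico_lt_top.ne
              _ = 2 * π := by rw [Real.volume_real_Ico_of_le Real.two_pi_pos.le, sub_zero]
  calc ∫ θ in Ico 0 (2 * π), Real.log ‖u θ‖ ≤ ∫ θ in Ico 0 (2 * π), v θ :=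
        setIntegral_mono_on hlogi hvi measurableSet_Ico fun θ _ ↦
          Real.log_le_log (norm_pos_iff.2 (hu0 θ)) (le_max_left _ _)
    _ = (∫ θ in E, v θ) + ∫ θ in Ico 0 (2 * π) \ E, v θ := by
        rw [← integral_inter_add_sdiff hE hvi, inter_eq_right.2 hEsub]
    _ ≤ (∫ θ in E, v θ) + 2 * π * Real.posLog M := by gcongr

theorem tendsto_setIntegral_log_max {ι : Type*} {l : Filter ι} [l.IsCountablyGenerated]
    {F : ι → ℝ → ℂ} (hF : ∀ᶠ i in l, Continuous (F i)) {M : ℝ}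
    (hM : ∀ᶠ i in l, ∀ θ, ‖F i θ‖ ≤ M) {E : Set ℝ} (hE : volume E ≠ ⊤)
    (hlim : ∀ᵐ θ ∂volume.restrict E, Tendsto (F · θ) l (𝓝 0)) {ε : ℝ} (hε : 0 < ε)
    (hε1 : ε ≤ 1) :
    Tendsto (fun i ↦ ∫ θ in E, Real.log (max ‖F i θ‖ ε)) l
      (𝓝 (volume.real E * Real.log ε)) := by
  have hlogε : Real.log ε ≤ 0 := Real.log_nonpos hε.le hε1
  have : IsFiniteMeasure (volume.restrict E) := isFiniteMeasure_restrict.2 hE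
  have h := tendsto_integral_filter_of_dominated_convergence (μ := volume.restrict E)
    (F := fun i θ ↦ Real.log (max ‖F i θ‖ ε)) (f := fun _ ↦ Real.log ε)
    (fun _ ↦ Real.posLog M - Real.log ε)
    (hF.mono fun i hi ↦ ((hi.norm.max continuous_const).log
      fun θ ↦ (lt_max_of_lt_right hε).ne').aestronglyMeasurable)
    (hM.mono fun i hi ↦ ae_of_all _ fun θ ↦ by
      have hlow := Real.log_le_log hε (le_max_right ‖F i θ‖ ε)
      have hup := log_max_le_posLog (norm_nonneg _) (hi θ) hε hε1
      rw [Real.norm_eq_abs, abs_le]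
      constructor <;> linarith [Real.posLog_nonneg (x := M)])
    (integrable_const _)
    (hlim.mono fun θ hθ ↦ by
      have h := (hθ.norm.max tendsto_const_nhds).log (x := max ‖(0 : ℂ)‖ ε) (by positivity)
      rwa [norm_zero, max_eq_right hε.le] at h)
  rwa [setIntegral_const, smul_eq_mul] at h

theorem apply_zero_eq_zero_of_radialLimit_eq_zero {f : ℂ → ℂ} {M : ℝ}
    (hf : DifferentiableOn ℂ f (ball 0 1)) (hM : ∀ z ∈ ball (0:ℂ) 1, ‖f z‖ ≤ M) {E : Set ℝ}
    (hE : MeasurableSet E) (hEsub : E ⊆ Ico 0 (2 * π)) (hE0 : volume E ≠ 0)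
    (hlim : ∀ᵐ θ : ℝ ∂volume.restrict E, RadialLimit f (exp (θ * I)) 0) :
    f 0 = 0 := by
  by_contra hf0
  have hmem : ∀ {r : ℝ}, 0 < r → r < 1 → ∀ θ : ℝ, (r : ℂ) * exp (θ * I) ∈ ball (0:ℂ) 1 :=
    fun hr0 hr1 θ ↦ by rwa [mem_ball_zero_iff, norm_ofReal_mul_exp, abs_of_pos hr0]
  have hcont : ∀ {r : ℝ}, 0 < r → r < 1 → Continuous fun θ : ℝ ↦ f (r * exp (θ * I)) :=
    fun hr0 hr1 ↦ hf.continuousOn.comp_continuous (by fun_prop) (hmem hr0 hr1)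
  -- Avoid the countably many radii on which `f` vanishes somewhere: there the pointwise bound
  -- `log ‖f‖ ≤ log (max ‖f‖ ε)` fails, since `Real.log 0 = 0`.
  set S : Set ℝ := norm '' {z ∈ ball (0:ℂ) 1 | f z = 0}
  have hS : S.Countable := (hf.countable_setOf_eq_zero isOpen_ball (isConnected_ball one_pos)
    (mem_ball_self one_pos) hf0).image _
  have := nhdsWithin_Iio_diff_neBot hS 1
  have hgood : ∀ᶠ r : ℝ in 𝓝[Iio 1 \ S] 1,
      0 < r ∧ r < 1 ∧ ∀ θ : ℝ, f ((r : ℂ) * exp (θ * I)) ≠ 0 := by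
    filter_upwards [self_mem_nhdsWithin, nhdsWithin_le_nhds (Ioi_mem_nhds one_pos)]
      with r ⟨hr1, hrS⟩ hr0
    refine ⟨hr0, hr1, fun θ hθ ↦ hrS ⟨_, ⟨hmem hr0 hr1 θ, hθ⟩, ?_⟩⟩
    rw [norm_ofReal_mul_exp, abs_of_pos hr0]
  have hE_fin : volume E ≠ ⊤ := ((measure_mono hEsub).trans_lt measure_Ico_lt_top).ne
  have key : ∀ ε, 0 < ε → ε ≤ 1 →
      2 * π * Real.log ‖f 0‖ ≤ volume.real E * Real.log ε + 2 * π * Real.posLog M := by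
    intro ε hε hε1
    have hint := tendsto_setIntegral_log_max (F := fun (r θ : ℝ) ↦ f (r * exp (θ * I)))
      (hgood.mono fun r h ↦ hcont h.1 h.2.1) (hgood.mono fun r h θ ↦ hM _ (hmem h.1 h.2.1 θ))
      hE_fin (hlim.mono fun θ hθ ↦ hθ.mono_left (nhdsWithin_mono _ sdiff_subset)) hε hε1
    refine ge_of_tendsto (hint.add_const _) ?_
    filter_upwards [hgood] with r ⟨hr0, hr1, hnz⟩
    exact (two_pi_mul_log_norm_le_integral hf hf0 hr0 hr1).trans
      (setIntegral_log_norm_le_setIntegral_log_max_add (hcont hr0 hr1) hnz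
        (fun θ ↦ hM _ (hmem hr0 hr1 θ)) hE hEsub hε hε1)
  have hμ : 0 < volume.real E := ENNReal.toReal_pos hE0 hE_fin
  have hbot : Tendsto (fun ε ↦ volume.real E * Real.log ε + 2 * π * Real.posLog M)
      (𝓝[>] 0) atBot :=
    (Real.tendsto_log_nhdsGT_zero.const_mul_atBot hμ).atBot_add tendsto_const_nhds
  obtain ⟨ε, hlt, hε⟩ :=
    ((hbot.eventually_lt_atBot (2 * π * Real.log ‖f 0‖)).and (Ioc_mem_nhdsGT one_pos)).exists
  linarith [key ε hε.1 hε.2]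

/-- Reflectionlessness at a single site, on the set `E` of angles. -/
def IsReflectionlessOn (fp fm : ℂ → ℂ) (E : Set ℝ) : Prop :=
  ∀ᵐ θ : ℝ ∂volume.restrict E, ∃ Lp Lm : ℂ,
    RadialLimit fp (exp (θ * I)) Lp ∧ RadialLimit fm (exp (θ * I)) Lm ∧
      exp (θ * I) * Lp = conj Lm

theorem RadialLimit.congr_eqOn {f g : ℂ → ℂ} {z L : ℂ} (hf : RadialLimit f z L) (hz : ‖z‖ = 1)
    (hfg : EqOn f g (ball 0 1)) : RadialLimit g z L := by
  refine hf.congr' (eventually_of_mem (Ioo_mem_nhdsLT (by norm_num : (-1 : ℝ) < 1))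
    fun r hr ↦ ?_)
  apply hfg
  rw [mem_ball_zero_iff, norm_mul, hz, mul_one, Complex.norm_real, Real.norm_eq_abs]
  exact abs_lt.2 hr

theorem IsReflectionlessOn.apply_zero_eq {fp fm gp gm : ℂ → ℂ} {E : Set ℝ}
    (hf : IsReflectionlessOn fp fm E) (hg : IsReflectionlessOn gp gm E) (hfp : IsSchur fp)
    (hgp : IsSchur gp) (hm : EqOn fm gm (ball 0 1)) (hE : MeasurableSet E)
    (hEsub : E ⊆ Ico 0 (2 * π)) (hE0 : volume E ≠ 0) :
    fp 0 = gp 0 := by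
  have hlim : ∀ᵐ θ : ℝ ∂volume.restrict E,
      RadialLimit (fun z ↦ fp z - gp z) (exp (θ * I)) 0 := by
    filter_upwards [hf, hg] with θ ⟨Lp, Lm, hLp, hLm, hrel⟩ ⟨Lp', Lm', hLp', hLm', hrel'⟩
    have hLm_eq : Lm = Lm' :=
      tendsto_nhds_unique (hLm.congr_eqOn (Complex.norm_exp_ofReal_mul_I θ) hm) hLm'
    have hLp_eq : Lp = Lp' := mul_left_cancel₀ (exp_ne_zero _) (by rw [hrel, hrel', hLm_eq])
    have h := hLp.sub hLp'
    rwa [hLp_eq, sub_self] at h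
  refine sub_eq_zero.1 (apply_zero_eq_zero_of_radialLimit_eq_zero (hfp.1.sub hgp.1) (M := 2)
    (fun z hz ↦ ?_) hE hEsub hE0 hlim)
  rw [Pi.sub_apply]
  linarith [norm_sub_le (fp z) (gp z), hfp.2 z hz, hgp.2 z hz]

theorem measurableSet_circleSet {S : Set ℂ} (hS : MeasurableSet S) :
    MeasurableSet (circleSet S) :=
  measurableSet_Ico.inter
    (hS.preimage (by fun_prop : Continuous fun θ : ℝ ↦ exp (θ * I)).measurable)

theorem statement11_general
    (α β : ℤ → ℂ)
    (fpα fmα fpβ fmβ : ℤ → ℂ → ℂ)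
    (hfpα : ∀ n : ℤ, HasSchurParams (fpα n) (fun k : ℕ => α (n + k)))
    (hfmα : ∀ n : ℤ, HasSchurParams (fmα n) (fun k : ℕ => -(starRingEnd ℂ) (α (n - 1 - k))))
    (hfpβ : ∀ n : ℤ, HasSchurParams (fpβ n) (fun k : ℕ => β (n + k)))
    (hfmβ : ∀ n : ℤ, HasSchurParams (fmβ n) (fun k : ℕ => -(starRingEnd ℂ) (β (n - 1 - k))))
    (A : Set ℂ) (hA : MeasurableSet A)
    (hApos : (volume : Measure ℝ) (circleSet A) ≠ 0)
    (hreflα : ∀ n : ℤ, ∀ᵐ θ : ℝ ∂((volume : Measure ℝ).restrict (circleSet A)),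
      ∃ Lp Lm : ℂ,
        RadialLimit (fpα n) (Complex.exp (θ * Complex.I)) Lp ∧
        RadialLimit (fmα n) (Complex.exp (θ * Complex.I)) Lm ∧
        Complex.exp (θ * Complex.I) * Lp = (starRingEnd ℂ) Lm)
    (hreflβ : ∀ n : ℤ, ∀ᵐ θ : ℝ ∂((volume : Measure ℝ).restrict (circleSet A)),
      ∃ Lp Lm : ℂ,
        RadialLimit (fpβ n) (Complex.exp (θ * Complex.I)) Lp ∧
        RadialLimit (fmβ n) (Complex.exp (θ * Complex.I)) Lm ∧
        Complex.exp (θ * Complex.I) * Lp = (starRingEnd ℂ) Lm)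
    (hagree : ∀ n : ℤ, n < 0 → α n = β n) :
    ∀ n : ℤ, α n = β n := by
  have hE := measurableSet_circleSet hA
  have hEsub : circleSet A ⊆ Ico 0 (2 * π) := fun θ hθ ↦ hθ.1
  have step : ∀ n : ℤ, (∀ m < n, α m = β m) → α n = β n := by
    intro n hlt
    have hparams : (fun k : ℕ ↦ -(starRingEnd ℂ) (α (n - 1 - k)))
        = fun k : ℕ ↦ -(starRingEnd ℂ) (β (n - 1 - k)) := by
      funext k
      rw [hlt _ (by omega)]
    have hm := (hfmα n).eqOn (hparams ▸ hfmβ n)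
    have h := IsReflectionlessOn.apply_zero_eq (hreflα n) (hreflβ n) (hfpα n).isSchur
      (hfpβ n).isSchur hm hE hEsub hApos
    simpa [(hfpα n).apply_zero, (hfpβ n).apply_zero] using h
  exact fun n ↦ Int.strongRec (m := 0) hagree (fun n _ ↦ step n) n

theorem statement11
    (α β : ℤ → ℂ) (hα : ∀ n, ‖α n‖ ≤ 1) (hβ : ∀ n, ‖β n‖ ≤ 1)
    (fpα fmα fpβ fmβ : ℤ → ℂ → ℂ)
    (hfpα : ∀ n : ℤ, HasSchurParams (fpα n) (fun k : ℕ => α (n + k)))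
    (hfmα : ∀ n : ℤ, HasSchurParams (fmα n) (fun k : ℕ => -(starRingEnd ℂ) (α (n - 1 - k))))
    (hfpβ : ∀ n : ℤ, HasSchurParams (fpβ n) (fun k : ℕ => β (n + k)))
    (hfmβ : ∀ n : ℤ, HasSchurParams (fmβ n) (fun k : ℕ => -(starRingEnd ℂ) (β (n - 1 - k))))
    (A : Set ℂ) (hA : MeasurableSet A) (hAsub : A ⊆ sphere (0:ℂ) 1)
    (hApos : (volume : Measure ℝ) (circleSet A) ≠ 0)
    (hreflα : ∀ n : ℤ, ∀ᵐ θ : ℝ ∂((volume : Measure ℝ).restrict (circleSet A)),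
      ∃ Lp Lm : ℂ,
        RadialLimit (fpα n) (Complex.exp (θ * Complex.I)) Lp ∧
        RadialLimit (fmα n) (Complex.exp (θ * Complex.I)) Lm ∧
        Complex.exp (θ * Complex.I) * Lp = (starRingEnd ℂ) Lm)
    (hreflβ : ∀ n : ℤ, ∀ᵐ θ : ℝ ∂((volume : Measure ℝ).restrict (circleSet A)),
      ∃ Lp Lm : ℂ,
        RadialLimit (fpβ n) (Complex.exp (θ * Complex.I)) Lp ∧
        RadialLimit (fmβ n) (Complex.exp (θ * Complex.I)) Lm ∧
        Complex.exp (θ * Complex.I) * Lp = (starRingEnd ℂ) Lm)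
    (hagree : ∀ n : ℤ, n < 0 → α n = β n) :
    ∀ n : ℤ, α n = β n :=
  statement11_general α β fpα fmα fpβ fmβ hfpα hfmα hfpβ hfmβ A hA hApos hreflα hreflβ hagree

end
end

section
/- Let (β_n)_{n≥0} be a sequence of independent (not necessarily identically distributed) 𝔻-valued random variables on a probability space (Ω, ℙ). For ω ∈ Ω let f_ω be the Schur function with parameter sequence (β_n(ω))_{n≥0} and Σ_ac(ω) = {e^{iθ} ∈ ∂𝔻 : the radial limit lim_{r↑1} f_ω(re^{iθ}) exists and has modulus < 1}. Then there exists a Borel set A ⊆ ∂𝔻 such that for ℙ-a.e. ω, the symmetric difference Σ_ac(ω) Δ A has Lebesgue measure zero; i.e., the essential support of the absolutely continuous spectrum of the random CMV matrix is deterministic almost surely. -/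
open MeasureTheory Filter Metric Complex Set Topology

noncomputable section

/-!
One step of the Schur algorithm reads `f_n(z) = M_{γ_n}(z f_{n+1}(z))`, where `M_a` is an
automorphism of the disc. It therefore does not change the set of boundary points at which the
radial limit exists and lies in the open disc. So for every `θ` the event "`e^{iθ}` is such a
point for `f_ω`" depends only on `(β_k)_{k ≥ m}`, for every `m`: it is a tail event, of
probability `0` or `1` by Kolmogorov's zero-one law. Let `A` be the set of `θ` where the
probability is `1`; Fubini's theorem on `Ω × ℝ` then shows that `Σ_ac(ω) Δ A` is null for almost
every `ω`.

Measurability comes from the Schur approximants, which converge geometrically on `|z| ≤ 1/2`.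
Cauchy's formula and the Taylor expansion then give joint measurability of `(ω, z) ↦ f_ω(z)` on
the whole disc, and by continuity radial limits can be taken along rational radii.
-/

open ComplexConjugate

def mobius (a u : ℂ) : ℂ := (a + u) / (1 + conj a * u)

section Mobius

variable {a u v w : ℂ}

theorem norm_one_add_conj_mul_sq_sub (a u : ℂ) :
    ‖1 + conj a * u‖ ^ 2 - ‖a + u‖ ^ 2 = (1 - ‖a‖ ^ 2) * (1 - ‖u‖ ^ 2) := by
  simp only [Complex.sq_norm, normSq_apply, add_re, add_im, mul_re, mul_im, conj_re, conj_im,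
    one_re, one_im]
  ring

theorem one_add_conj_mul_ne_zero (h : ‖a‖ * ‖u‖ < 1) : 1 + conj a * u ≠ 0 := by
  intro h0
  have : ‖conj a * u‖ = 1 := by rw [show conj a * u = -1 by linear_combination h0]; simp
  rw [norm_mul, norm_conj] at this
  linarith

theorem eq_mobius_of_mul_one_sub (h : ‖a‖ * ‖v‖ < 1) (hrec : v * (1 - conj a * w) = w - a) :
    w = mobius a v := by
  rw [mobius, eq_div_iff (one_add_conj_mul_ne_zero h)]
  linear_combination -hrec

theorem norm_mobius_lt_one (ha : ‖a‖ < 1) (hu : ‖u‖ < 1) : ‖mobius a u‖ < 1 := by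
  have hden : 1 + conj a * u ≠ 0 := one_add_conj_mul_ne_zero (by nlinarith [norm_nonneg u])
  rw [mobius, norm_div, div_lt_one (norm_pos_iff.2 hden)]
  have := norm_one_add_conj_mul_sq_sub a u
  have hpos : 0 < (1 - ‖a‖ ^ 2) * (1 - ‖u‖ ^ 2) :=
    mul_pos (by nlinarith [norm_nonneg a]) (by nlinarith [norm_nonneg u])
  have hsq : ‖a + u‖ ^ 2 < ‖1 + conj a * u‖ ^ 2 := by linarith
  exact lt_of_pow_lt_pow_left₀ 2 (norm_nonneg _) hsq

theorem mobius_neg_mobius (ha : ‖a‖ < 1) (hu : ‖u‖ < 1) : mobius (-a) (mobius a u) = u := by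
  have hden : 1 + conj a * u ≠ 0 := one_add_conj_mul_ne_zero (by nlinarith [norm_nonneg u])
  refine (eq_mobius_of_mul_one_sub ?_ ?_).symm
  · rw [norm_neg]; nlinarith [norm_nonneg a, norm_mobius_lt_one ha hu]
  · rw [mobius, map_neg, div_mul_eq_mul_div, div_eq_iff hden]
    ring

theorem continuousOn_mobius (ha : ‖a‖ < 1) : ContinuousOn (mobius a) (ball 0 1) := by
  refine (continuousOn_const.add continuousOn_id).div
    (continuousOn_const.add (continuousOn_const.mul continuousOn_id)) fun u hu => ?_
  exact one_add_conj_mul_ne_zero (by rw [mem_ball_zero_iff] at hu; nlinarith [norm_nonneg a])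

theorem norm_mobius_sub_mobius_le (ha : ‖a‖ ≤ 1) (hu : ‖u‖ ≤ 1 / 2) (hv : ‖v‖ ≤ 1 / 2) :
    ‖mobius a u - mobius a v‖ ≤ 4 / 3 * ‖u - v‖ := by
  have hden : ∀ {w : ℂ}, ‖w‖ ≤ 1 / 2 → 1 - ‖a‖ / 2 ≤ ‖1 + conj a * w‖ := fun {w} hw => by
    have := norm_sub_norm_le (1 : ℂ) (-(conj a * w))
    rw [norm_one, norm_neg, norm_mul, norm_conj, sub_neg_eq_add] at this
    nlinarith [norm_nonneg a]
  have hpos : 0 < 1 - ‖a‖ / 2 := by linarith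
  have hu' := hden hu
  have hv' := hden hv
  have hdiff : mobius a u - mobius a v
      = (u - v) * ((1 - ‖a‖ ^ 2 : ℝ) : ℂ) / ((1 + conj a * u) * (1 + conj a * v)) := by
    rw [mobius, mobius, div_sub_div _ _ (norm_pos_iff.1 (hpos.trans_le hu'))
      (norm_pos_iff.1 (hpos.trans_le hv')), ofReal_sub, ofReal_pow, ← mul_conj', ofReal_one]
    ring
  have hfactor : 0 ≤ 1 - ‖a‖ ^ 2 := by nlinarith [norm_nonneg a]
  rw [hdiff, norm_div, norm_mul, norm_mul, norm_real, Real.norm_of_nonneg hfactor,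
    div_le_iff₀ (mul_pos (hpos.trans_le hu') (hpos.trans_le hv'))]
  -- `1 - t² ≤ 4/3 (1 - t/2)²` is `(1 - 2t)² ≥ 0`
  have hkey : 1 - ‖a‖ ^ 2 ≤ 4 / 3 * ((1 - ‖a‖ / 2) * (1 - ‖a‖ / 2)) := by
    nlinarith [sq_nonneg (1 - 2 * ‖a‖)]
  calc ‖u - v‖ * (1 - ‖a‖ ^ 2)
      ≤ ‖u - v‖ * (4 / 3 * ((1 - ‖a‖ / 2) * (1 - ‖a‖ / 2))) := by gcongr
    _ ≤ 4 / 3 * ‖u - v‖ * (‖1 + conj a * u‖ * ‖1 + conj a * v‖) := by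
      have := mul_le_mul hu' hv' hpos.le (norm_nonneg _)
      nlinarith [norm_nonneg (u - v)]

end Mobius

structure IsSchurTower (g : ℕ → ℂ → ℂ) (a : ℕ → ℂ) : Prop where
  isSchur : ∀ n, IsSchur (g n)
  norm_lt_one : ∀ n, ‖a n‖ < 1
  eq_mobius : ∀ n, ∀ z ∈ ball (0 : ℂ) 1, g n z = mobius (a n) (z * g (n + 1) z)

theorem norm_mul_le_of_isSchur {g : ℂ → ℂ} (hg : IsSchur g) {z : ℂ}
    (hz : z ∈ ball (0 : ℂ) 1) : ‖z * g z‖ ≤ ‖z‖ := by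
  rw [norm_mul]
  exact mul_le_of_le_one_right (norm_nonneg z) (hg.2 z hz)

theorem HasSchurParams.exists_isSchurTower {f : ℂ → ℂ} {α : ℕ → ℂ} (h : HasSchurParams f α)
    (hα : ∀ n, ‖α n‖ < 1) : ∃ g, g 0 = f ∧ IsSchurTower g α := by
  obtain ⟨g, hg0, hschur, -, hrec⟩ := h
  refine ⟨g, hg0, hschur, hα, fun n z hz => eq_mobius_of_mul_one_sub ?_ (hrec n (hα n) z hz)⟩
  have := norm_mul_le_of_isSchur (hschur (n + 1)) hz
  rw [mem_ball_zero_iff] at hz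
  nlinarith [norm_nonneg (α n), hα n, norm_nonneg (z * g (n + 1) z)]

theorem IsSchurTower.shift {g : ℕ → ℂ → ℂ} {a : ℕ → ℂ} (h : IsSchurTower g a) (m : ℕ) :
    IsSchurTower (fun n => g (n + m)) (fun n => a (n + m)) where
  isSchur n := h.isSchur (n + m)
  norm_lt_one n := h.norm_lt_one (n + m)
  eq_mobius n z hz := by simpa only [Nat.add_right_comm n 1 m] using h.eq_mobius (n + m) z hz

/-- The `n`-th Schur approximant: the continued fraction of the Schur algorithm truncated
by replacing the `n`-th iterate with `0`. -/
def schurApprox : ℕ → (ℕ → ℂ) → ℂ → ℂ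
  | 0, _, _ => 0
  | n + 1, a, z => mobius (a 0) (z * schurApprox n (fun k => a (k + 1)) z)

theorem norm_schurApprox_lt_one {a : ℕ → ℂ} (ha : ∀ k, ‖a k‖ < 1) {z : ℂ} (hz : ‖z‖ < 1)
    (n : ℕ) : ‖schurApprox n a z‖ < 1 := by
  induction n generalizing a with
  | zero => simp [schurApprox]
  | succ n ih =>
    refine norm_mobius_lt_one (ha 0) ?_
    rw [norm_mul]
    exact mul_lt_one_of_nonneg_of_lt_one_left (norm_nonneg z) hz (ih fun k => ha (k + 1)).le

/-- `mobius a` is `4/3`-Lipschitz on `‖u‖ ≤ 1/2`, so for `‖z‖ ≤ 1/2` each step of the Schur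
algorithm contracts by `2/3`. -/
theorem IsSchurTower.norm_sub_schurApprox_le {g : ℕ → ℂ → ℂ} {a : ℕ → ℂ}
    (h : IsSchurTower g a) {z : ℂ} (hz : ‖z‖ ≤ 1 / 2) (n : ℕ) :
    ‖g 0 z - schurApprox n a z‖ ≤ 2 * (2 / 3) ^ n := by
  have hz1 : z ∈ ball (0 : ℂ) 1 := by rw [mem_ball_zero_iff]; linarith
  induction n generalizing g a with
  | zero =>
    have := (h.isSchur 0).2 z hz1
    simp only [schurApprox, sub_zero, pow_zero]
    linarith
  | succ n ih =>
    have hhalf : ∀ {w : ℂ}, ‖w‖ ≤ 1 → ‖z * w‖ ≤ 1 / 2 := fun {w} hw => by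
      rw [norm_mul]; nlinarith [norm_nonneg z, norm_nonneg w]
    have happrox := norm_schurApprox_lt_one (fun k => h.norm_lt_one (k + 1)) (by linarith) n
    have ih' : ‖g 1 z - schurApprox n (fun k => a (k + 1)) z‖ ≤ 2 * (2 / 3) ^ n := by
      simpa using ih (h.shift 1)
    rw [h.eq_mobius 0 z hz1, schurApprox]
    calc _ ≤ 4 / 3 * ‖z * g 1 z - z * schurApprox n (fun k => a (k + 1)) z‖ :=
          norm_mobius_sub_mobius_le (h.norm_lt_one 0).le (hhalf ((h.isSchur 1).2 z hz1))
            (hhalf happrox.le)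
      _ = 4 / 3 * (‖z‖ * ‖g 1 z - schurApprox n (fun k => a (k + 1)) z‖) := by
          rw [← mul_sub, norm_mul]
      _ ≤ 4 / 3 * (1 / 2 * (2 * (2 / 3) ^ n)) := by gcongr
      _ = 2 * (2 / 3) ^ (n + 1) := by ring

def HasRadialLimitInDisc (F : ℂ → ℂ) (θ : ℝ) : Prop :=
  ∃ L, RadialLimit F (exp (θ * I)) L ∧ ‖L‖ < 1

section RadialLimit

variable {F G : ℂ → ℂ} {θ : ℝ}

theorem mapsTo_ofReal_mul_exp_Ioo (θ : ℝ) :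
    MapsTo (fun r : ℝ => (r : ℂ) * exp (θ * I)) (Ioo 0 1) (ball (0 : ℂ) 1 \ {0}) := by
  intro r hr
  have hnorm : ‖(r : ℂ) * exp (θ * I)‖ = r := by
    rw [norm_mul, norm_exp_ofReal_mul_I, mul_one, norm_real, Real.norm_of_nonneg hr.1.le]
  refine ⟨mem_ball_zero_iff.2 (hnorm.trans_lt hr.2), fun h0 => ?_⟩
  rw [show (r : ℂ) * exp (θ * I) = 0 from h0, norm_zero] at hnorm
  exact hr.1.ne hnorm

theorem eventually_ofReal_mul_exp_mem (θ : ℝ) :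
    ∀ᶠ r : ℝ in 𝓝[<] 1, (r : ℂ) * exp (θ * I) ∈ ball (0 : ℂ) 1 \ {0} :=
  Filter.mem_of_superset (Ioo_mem_nhdsLT one_pos) (mapsTo_ofReal_mul_exp_Ioo θ)

theorem tendsto_ofReal_mul_nhdsLT_one (e : ℂ) :
    Tendsto (fun r : ℝ => (r : ℂ) * e) (𝓝[<] 1) (𝓝 e) := by
  have : Continuous fun r : ℝ => (r : ℂ) * e := by fun_prop
  exact (this.tendsto' 1 e (by simp)).mono_left nhdsWithin_le_nhds

theorem hasRadialLimitInDisc_congr (h : EqOn F G (ball 0 1)) :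
    HasRadialLimitInDisc F θ ↔ HasRadialLimitInDisc G θ := by
  have hev : (fun r : ℝ => F (r * exp (θ * I))) =ᶠ[𝓝[<] 1] fun r => G (r * exp (θ * I)) :=
    (eventually_ofReal_mul_exp_mem θ).mono fun r hr => h hr.1
  simp only [HasRadialLimitInDisc, RadialLimit, tendsto_congr' hev]

theorem HasRadialLimitInDisc.comp {φ : ℂ → ℂ} (hφ : ContinuousOn φ (ball 0 1))
    (hmaps : MapsTo φ (ball 0 1) (ball 0 1)) (h : HasRadialLimitInDisc F θ) :
    HasRadialLimitInDisc (fun z => φ (F z)) θ := by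
  obtain ⟨L, hL, hL1⟩ := h
  have hLmem : L ∈ ball (0 : ℂ) 1 := mem_ball_zero_iff.2 hL1
  exact ⟨φ L, ((hφ.continuousAt (isOpen_ball.mem_nhds hLmem)).tendsto.comp hL),
    mem_ball_zero_iff.1 (hmaps hLmem)⟩

theorem hasRadialLimitInDisc_mobius_comp_iff {a : ℂ} (ha : ‖a‖ < 1)
    (hF : MapsTo F (ball 0 1) (ball 0 1)) :
    HasRadialLimitInDisc (fun z => mobius a (F z)) θ ↔ HasRadialLimitInDisc F θ := by
  have hmaps : ∀ {b : ℂ}, ‖b‖ < 1 → MapsTo (mobius b) (ball 0 1) (ball 0 1) := fun hb _ hu =>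
    mem_ball_zero_iff.2 (norm_mobius_lt_one hb (mem_ball_zero_iff.1 hu))
  refine ⟨fun h => ?_, HasRadialLimitInDisc.comp (continuousOn_mobius ha) (hmaps ha)⟩
  have hneg : ‖-a‖ < 1 := by rwa [norm_neg]
  refine (hasRadialLimitInDisc_congr fun z hz => ?_).1
    (h.comp (continuousOn_mobius hneg) (hmaps hneg))
  exact mobius_neg_mobius ha (mem_ball_zero_iff.1 (hF hz))

theorem hasRadialLimitInDisc_id_mul_iff :
    HasRadialLimitInDisc (fun z => z * F z) θ ↔ HasRadialLimitInDisc F θ := by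
  set e := exp (θ * I)
  have he : ‖e‖ = 1 := norm_exp_ofReal_mul_I θ
  have hre := tendsto_ofReal_mul_nhdsLT_one e
  constructor
  · rintro ⟨M, hM, hM1⟩
    have hev : (fun r : ℝ => (r * e)⁻¹ * (r * e * F (r * e))) =ᶠ[𝓝[<] 1]
        fun r => F (r * e) :=
      (eventually_ofReal_mul_exp_mem θ).mono fun r hr => inv_mul_cancel_left₀ hr.2 _
    refine ⟨e⁻¹ * M, ((hre.inv₀ (exp_ne_zero _)).mul hM).congr' hev, ?_⟩
    rwa [norm_mul, norm_inv, he, inv_one, one_mul]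
  · rintro ⟨L, hL, hL1⟩
    exact ⟨e * L, hre.mul hL, by rwa [norm_mul, he, one_mul]⟩

theorem IsSchurTower.hasRadialLimitInDisc_succ_iff {g : ℕ → ℂ → ℂ} {a : ℕ → ℂ}
    (h : IsSchurTower g a) (n : ℕ) :
    HasRadialLimitInDisc (g (n + 1)) θ ↔ HasRadialLimitInDisc (g n) θ := by
  have hmaps : MapsTo (fun z => z * g (n + 1) z) (ball 0 1) (ball 0 1) := fun z hz =>
    mem_ball_zero_iff.2 ((norm_mul_le_of_isSchur (h.isSchur (n + 1)) hz).trans_lt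
      (mem_ball_zero_iff.1 hz))
  rw [← hasRadialLimitInDisc_id_mul_iff, ← hasRadialLimitInDisc_mobius_comp_iff (h.norm_lt_one n)
    hmaps, hasRadialLimitInDisc_congr fun z hz => (h.eq_mobius n z hz).symm]

theorem IsSchurTower.hasRadialLimitInDisc_iff {g : ℕ → ℂ → ℂ} {a : ℕ → ℂ}
    (h : IsSchurTower g a) (n : ℕ) :
    HasRadialLimitInDisc (g n) θ ↔ HasRadialLimitInDisc (g 0) θ := by
  induction n with
  | zero => rfl
  | succ n ih => rw [h.hasRadialLimitInDisc_succ_iff, ih]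

end RadialLimit

theorem tendsto_nhdsLT_one_iff_rat {E : Type*} [TopologicalSpace E] [RegularSpace E]
    {F : ℝ → E} (hF : ContinuousOn F (Ioo 0 1)) {L : E} :
    Tendsto F (𝓝[<] 1) (𝓝 L) ↔ Tendsto (fun q : Ioo (0 : ℚ) 1 => F ((q : ℚ) : ℝ))
      (comap (fun q : Ioo (0 : ℚ) 1 => ((q : ℚ) : ℝ)) (𝓝[<] 1)) (𝓝 L) := by
  refine ⟨fun h => h.comp tendsto_comap, fun h => ?_⟩
  refine (closed_nhds_basis L).tendsto_right_iff.2 fun s ⟨hs, hsc⟩ => ?_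
  obtain ⟨t, ht, hts⟩ := mem_comap.1 (h hs)
  obtain ⟨l, hl, hlt⟩ := mem_nhdsLT_iff_exists_Ioo_subset.1 ht
  have hl0 : max l 0 < 1 := max_lt hl one_pos
  filter_upwards [Ioo_mem_nhdsLT hl0] with r hr
  -- `F r` is a limit of values of `F` at rationals of `(max l 0, 1)`, which all lie in `s`
  have hsub : F '' (Ioo (max l 0) 1 ∩ range ((↑) : ℚ → ℝ)) ⊆ s := by
    rintro _ ⟨_, ⟨hx, q, rfl⟩, rfl⟩
    have hq : q ∈ Ioo (0 : ℚ) 1 :=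
      ⟨by exact_mod_cast (le_max_right _ _).trans_lt hx.1, by exact_mod_cast hx.2⟩
    exact hts (a := ⟨q, hq⟩) (hlt ⟨(le_max_left _ _).trans_lt hx.1, hx.2⟩)
  have hcont : ContinuousAt F r :=
    hF.continuousAt (Ioo_mem_nhds ((le_max_right _ _).trans_lt hr.1) hr.2)
  exact hsc.closure_subset_iff.2 hsub (mem_closure_image hcont
    (Rat.denseRange_cast.open_subset_closure_inter isOpen_Ioo hr))

theorem neBot_comap_rat_nhdsLT_one :
    (comap (fun q : Ioo (0 : ℚ) 1 => ((q : ℚ) : ℝ)) (𝓝[<] 1)).NeBot := by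
  refine comap_neBot fun t ht => ?_
  obtain ⟨l, hl, hlt⟩ := mem_nhdsLT_iff_exists_Ioo_subset.1 ht
  obtain ⟨q, hlq, hq1⟩ := exists_rat_btwn (max_lt (mem_Iio.1 hl) one_pos)
  exact ⟨⟨q, by exact_mod_cast (le_max_right _ _).trans_lt hlq, by exact_mod_cast hq1⟩,
    hlt ⟨(le_max_left _ _).trans_lt hlq, hq1⟩⟩

theorem measurableSet_hasRadialLimitInDisc {X : Type*} [MeasurableSpace X] {G : X → ℂ → ℂ}
    (hcont : ∀ x, ContinuousOn (G x) (ball 0 1))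
    (hG : Measurable fun p : X × ball (0 : ℂ) 1 => G p.1 p.2) :
    MeasurableSet {p : X × ℝ | HasRadialLimitInDisc (G p.1) p.2} := by
  set l := comap (fun q : Ioo (0 : ℚ) 1 => ((q : ℚ) : ℝ)) (𝓝[<] 1)
  have : l.NeBot := neBot_comap_rat_nhdsLT_one
  set u : Ioo (0 : ℚ) 1 → X × ℝ → ℂ := fun q p => G p.1 (((q : ℚ) : ℝ) * exp (p.2 * I))
  have hu : ∀ q, StronglyMeasurable (u q) := fun q => by
    have hmem : ∀ p : X × ℝ, ((q : ℚ) : ℝ) * exp (p.2 * I) ∈ ball (0 : ℂ) 1 := fun p =>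
      (mapsTo_ofReal_mul_exp_Ioo p.2 ⟨by exact_mod_cast q.2.1, by exact_mod_cast q.2.2⟩).1
    have hz : Measurable fun p : X × ℝ => (((q : ℚ) : ℝ) : ℂ) * exp (p.2 * I) := by fun_prop
    exact (hG.comp (measurable_fst.prodMk (hz.subtype_mk (h := hmem)))).stronglyMeasurable
  have hiff : ∀ p : X × ℝ, HasRadialLimitInDisc (G p.1) p.2 ↔
      (∃ L, Tendsto (fun q => u q p) l (𝓝 L)) ∧ ‖limUnder l fun q => u q p‖ < 1 := by
    intro p
    have hF : ContinuousOn (fun r : ℝ => G p.1 (r * exp (p.2 * I))) (Ioo 0 1) :=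
      (hcont p.1).comp (by fun_prop) fun r hr => (mapsTo_ofReal_mul_exp_Ioo p.2 hr).1
    simp only [HasRadialLimitInDisc, RadialLimit, tendsto_nhdsLT_one_iff_rat hF]
    constructor
    · rintro ⟨L, hL, hL1⟩
      exact ⟨⟨L, hL⟩, hL.limUnder_eq ▸ hL1⟩
    · rintro ⟨⟨L, hL⟩, hL1⟩
      exact ⟨L, hL, hL.limUnder_eq ▸ hL1⟩
  simp only [hiff, ofPred_and]
  exact (StronglyMeasurable.measurableSet_exists_tendsto hu).inter
    (measurableSet_lt (StronglyMeasurable.limUnder hu).measurable.norm measurable_const)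

section Measurability

variable {X : Type*} [MeasurableSpace X]

theorem Measurable.mobius {a u : X → ℂ} (ha : Measurable a) (hu : Measurable u) :
    Measurable fun x => mobius (a x) (u x) := by
  unfold _root_.mobius
  fun_prop

theorem measurable_schurApprox {b : ℕ → X → ℂ} (hb : ∀ k, Measurable (b k)) {ζ : X → ℂ}
    (hζ : Measurable ζ) (n : ℕ) : Measurable fun x => schurApprox n (fun k => b k x) (ζ x) := by
  induction n generalizing b with
  | zero => exact measurable_const
  | succ n ih => exact (hb 0).mobius (hζ.mul (ih fun k => hb (k + 1)))

theorem measurable_of_isSchurTower_closedBall_half {g : X → ℕ → ℂ → ℂ} {b : ℕ → X → ℂ}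
    (hb : ∀ n, Measurable (b n)) (hg : ∀ x, IsSchurTower (g x) fun n => b n x) :
    Measurable fun p : X × closedBall (0 : ℂ) (1 / 2) => g p.1 0 p.2 := by
  refine measurable_of_tendsto_metrizable (f := fun n p => schurApprox n (fun k => b k p.1) p.2)
    (fun n => measurable_schurApprox (fun k => (hb k).comp measurable_fst)
      (measurable_subtype_coe.comp measurable_snd) n) (tendsto_pi_nhds.2 fun p => ?_)
  have hgeom : Tendsto (fun n : ℕ => 2 * (2 / 3 : ℝ) ^ n) atTop (𝓝 0) := by
    simpa using (tendsto_pow_atTop_nhds_zero_of_lt_one (r := (2 / 3 : ℝ)) (by norm_num)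
      (by norm_num)).const_mul 2
  refine tendsto_iff_norm_sub_tendsto_zero.2
    (squeeze_zero (fun _ => norm_nonneg _) (fun n => ?_) hgeom)
  rw [norm_sub_rev]
  exact (hg p.1).norm_sub_schurApprox_le (mem_closedBall_zero_iff.1 p.2.2) n

theorem measurable_circleIntegral {F : X → ℂ → ℂ} {c : ℂ} {R : ℝ}
    (hF : Measurable fun p : X × ℝ => F p.1 (circleMap c R p.2)) :
    Measurable fun x => ∮ z in C(c, R), F x z := by
  simp only [circleIntegral, intervalIntegral.integral_of_le Real.two_pi_pos.le]
  refine (StronglyMeasurable.integral_prod_right' (ν := volume.restrict (Ioc 0 (2 * Real.pi)))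
    (f := fun p : X × ℝ => deriv (circleMap c R) p.2 • F p.1 (circleMap c R p.2)) ?_).measurable
  simp only [deriv_circleMap]
  exact (((continuous_circleMap 0 R).measurable.comp measurable_snd).mul_const I).smul hF
    |>.stronglyMeasurable

theorem measurable_iteratedDeriv {F : X → ℂ → ℂ} {c : ℂ} {R : ℝ} (hR : 0 < R)
    (hd : ∀ x, DifferentiableOn ℂ (F x) (closedBall c R))
    (hF : Measurable fun p : X × ℝ => F p.1 (circleMap c R p.2)) (n : ℕ) :
    Measurable fun x => iteratedDeriv n (F x) c := by
  have hcauchy : ∀ x, iteratedDeriv n (F x) c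
      = (2 * Real.pi * I / n.factorial)⁻¹ • ∮ z in C(c, R), (1 / (z - c) ^ (n + 1)) • F x z := by
    intro x
    rw [(hd x).circleIntegral_one_div_sub_center_pow_smul hR n, inv_smul_smul₀]
    exact div_ne_zero two_pi_I_ne_zero (Nat.cast_ne_zero.2 n.factorial_ne_zero)
  simp only [hcauchy]
  refine Measurable.const_smul (measurable_circleIntegral
    (F := fun x z => (1 / (z - c) ^ (n + 1)) • F x z) ?_) (2 * Real.pi * I / n.factorial)⁻¹
  have hcirc : Measurable fun p : X × ℝ => circleMap c R p.2 :=
    (continuous_circleMap c R).measurable.comp measurable_snd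
  exact (((hcirc.sub_const c).pow_const (n + 1)).const_div 1).smul hF

theorem measurable_of_differentiableOn_ball {F : X → ℂ → ℂ} {c : ℂ} {r R : ℝ} (hR : 0 < R)
    (hRr : R < r) (hd : ∀ x, DifferentiableOn ℂ (F x) (ball c r))
    (hF : Measurable fun p : X × ℝ => F p.1 (circleMap c R p.2)) :
    Measurable fun p : X × ball c r => F p.1 p.2 := by
  have hcoeff := measurable_iteratedDeriv hR (fun x => (hd x).mono (closedBall_subset_ball hRr))
    hF
  have hpartial : ∀ N, Measurable fun p : X × ball c r => ∑ n ∈ Finset.range N,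
      (n.factorial : ℂ)⁻¹ • ((p.2 : ℂ) - c) ^ n • iteratedDeriv n (F p.1) c := fun N =>
    Finset.measurable_sum _ fun n _ => by
      have hz : Measurable fun p : X × ball c r => (p.2 : ℂ) :=
        measurable_subtype_coe.comp measurable_snd
      have hcn : Measurable fun p : X × ball c r => iteratedDeriv n (F p.1) c :=
        (hcoeff n).comp measurable_fst
      fun_prop
  exact measurable_of_tendsto_metrizable hpartial (tendsto_pi_nhds.2 fun p =>
    (Complex.hasSum_taylorSeries_on_ball (hd p.1) p.2.2).tendsto_sum_nat)

end Measurability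

theorem measurableSet_hasRadialLimitInDisc_of_isSchurTower {X : Type*} [MeasurableSpace X]
    {g : X → ℕ → ℂ → ℂ} {b : ℕ → X → ℂ} (hb : ∀ n, Measurable (b n))
    (hg : ∀ x, IsSchurTower (g x) fun n => b n x) :
    MeasurableSet {p : X × ℝ | HasRadialLimitInDisc (g p.1 0) p.2} := by
  have hcirc : Measurable fun p : X × ℝ => g p.1 0 (circleMap 0 (1 / 2) p.2) :=
    (measurable_of_isSchurTower_closedBall_half hb hg).comp (measurable_fst.prodMk
      (((continuous_circleMap 0 (1 / 2)).measurable.comp measurable_snd).subtype_mk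
        (h := fun p => circleMap_mem_closedBall 0 (by norm_num) p.2)))
  exact measurableSet_hasRadialLimitInDisc (fun x => ((hg x).isSchur 0).1.continuousOn)
    (measurable_of_differentiableOn_ball (by norm_num) (by norm_num)
      (fun x => ((hg x).isSchur 0).1) hcirc)

theorem measurableSet_limsup_hasRadialLimitInDisc {Ω : Type*} [MeasurableSpace Ω]
    {β : ℕ → Ω → ℂ} {g : Ω → ℕ → ℂ → ℂ} (hg : ∀ ω, IsSchurTower (g ω) fun n => β n ω)
    (θ : ℝ) :
    MeasurableSet[limsup (fun n => MeasurableSpace.comap (β n) inferInstance) atTop]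
      {ω | HasRadialLimitInDisc (g ω 0) θ} := by
  rw [limsup_eq_iInf_iSup_of_nat, MeasurableSpace.measurableSet_iInf]
  intro m
  set M := ⨆ i ≥ m, MeasurableSpace.comap (β i) inferInstance
  have hb : ∀ n, Measurable[M] (β (n + m)) := fun n => measurable_iff_comap_le.2
    (le_iSup₂ (f := fun i (_ : i ≥ m) => MeasurableSpace.comap (β i) inferInstance) (n + m)
      (Nat.le_add_left m n))
  have hset := @measurableSet_hasRadialLimitInDisc_of_isSchurTower Ω M
    (fun ω n => g ω (n + m)) (fun n => β (n + m)) hb fun ω => (hg ω).shift m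
  have hsection : {ω | HasRadialLimitInDisc (g ω 0) θ}
      = (fun ω => (ω, θ)) ⁻¹' {p | HasRadialLimitInDisc (g p.1 (0 + m)) p.2} := by
    ext ω
    simp only [mem_preimage, mem_ofPred_eq, zero_add, (hg ω).hasRadialLimitInDisc_iff]
  rw [hsection]
  exact @measurable_prodMk_right Ω ℝ M _ θ _ hset

theorem exists_measurableSet_ae_measure_symmDiff_eq_zero {α γ : Type*} [MeasurableSpace α]
    [MeasurableSpace γ] {μ : Measure α} {ν : Measure γ} [SFinite μ] [SFinite ν]
    {D : Set (α × γ)} (hD : MeasurableSet D)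
    (h01 : ∀ y, μ {x | (x, y) ∈ D} = 0 ∨ μ {x | (x, y) ∉ D} = 0) :
    ∃ A, MeasurableSet A ∧ ∀ᵐ x ∂μ, ν (symmDiff {y | (x, y) ∈ D} A) = 0 := by
  set A := {y | μ {x | (x, y) ∉ D} = 0}
  have hA : MeasurableSet A := measurable_measure_prodMk_right hD.compl (measurableSet_singleton 0)
  have hE : MeasurableSet (symmDiff D (univ ×ˢ A)) := hD.symmDiff (MeasurableSet.univ.prod hA)
  have hsection : ∀ y, μ ((fun x => (x, y)) ⁻¹' symmDiff D (univ ×ˢ A)) = 0 := by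
    intro y
    by_cases hy : y ∈ A
    · rw [show (fun x => (x, y)) ⁻¹' symmDiff D (univ ×ˢ A) = {x | (x, y) ∉ D} by
        ext x; simp [hy, mem_symmDiff]]
      exact hy
    · rw [show (fun x => (x, y)) ⁻¹' symmDiff D (univ ×ˢ A) = {x | (x, y) ∈ D} by
        ext x; simp [hy, mem_symmDiff]]
      exact (h01 y).resolve_right hy
  have hnull : (μ.prod ν) (symmDiff D (univ ×ˢ A)) = 0 := by
    rw [Measure.prod_apply_symm hE]
    simp only [hsection, lintegral_zero]
  refine ⟨A, hA, ?_⟩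
  filter_upwards [(Measure.measure_prod_null hE).1 hnull] with x hx
  rwa [show symmDiff {y | (x, y) ∈ D} A = Prod.mk x ⁻¹' symmDiff D (univ ×ˢ A) by
    ext y; simp [mem_symmDiff]]

theorem statement13
    {Ω : Type} [MeasureSpace Ω] [IsProbabilityMeasure (volume : Measure Ω)]
    (β : ℕ → Ω → ℂ) (hmeas : ∀ n, Measurable (β n))
    (hD : ∀ n ω, ‖β n ω‖ < 1)
    (hindep : ProbabilityTheory.iIndepFun β (volume : Measure Ω))
    (f : Ω → ℂ → ℂ)
    (hf : ∀ ω, HasSchurParams (f ω) (fun n => β n ω)) :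
    ∃ A : Set ℝ, MeasurableSet A ∧
      ∀ᵐ ω : Ω, (volume : Measure ℝ)
        (symmDiff {θ : ℝ | θ ∈ Set.Ico 0 (2 * Real.pi) ∧
          ∃ L : ℂ, RadialLimit (f ω) (Complex.exp (θ * Complex.I)) L ∧ ‖L‖ < 1}
          A) = 0 := by
  choose g hg0 hg using fun ω => (hf ω).exists_isSchurTower (hD · ω)
  set D := {p : Ω × ℝ | p.2 ∈ Ico 0 (2 * Real.pi) ∧ HasRadialLimitInDisc (f p.1) p.2}
  have hgood := measurableSet_hasRadialLimitInDisc_of_isSchurTower hmeas hg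
  simp only [hg0] at hgood
  have hDmeas : MeasurableSet D := (measurable_snd measurableSet_Ico).inter hgood
  have h01 : ∀ θ, volume {ω | (ω, θ) ∈ D} = 0 ∨ volume {ω | (ω, θ) ∉ D} = 0 := by
    intro θ
    by_cases hθ : θ ∈ Ico 0 (2 * Real.pi)
    · have htail := measurableSet_limsup_hasRadialLimitInDisc hg θ
      simp only [hg0] at htail
      have hsection : {ω | (ω, θ) ∈ D} = {ω | HasRadialLimitInDisc (f ω) θ} := by
        simp only [D, mem_ofPred_eq, hθ, true_and]
      have hmeasθ : MeasurableSet {ω | HasRadialLimitInDisc (f ω) θ} :=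
        hsection ▸ measurable_prodMk_right hDmeas
      rw [show {ω | (ω, θ) ∉ D} = {ω | (ω, θ) ∈ D}ᶜ from rfl, hsection,
        prob_compl_eq_zero_iff hmeasθ]
      exact ProbabilityTheory.measure_zero_or_one_of_measurableSet_limsup_atTop
        (fun n => (hmeas n).comap_le) hindep htail
    · simp only [D, mem_ofPred_eq, hθ, false_and, ofPred_false, measure_empty, true_or]
  exact exists_measurableSet_ae_measure_symmDiff_eq_zero hDmeas h01

end
end

section
/- (Characterization of the Simon class.) Let (a_n)_{n∈ℤ} with a_n ≥ 0 and (b_n)_{n∈ℤ} ⊆ ℝ be bounded sequences and let H be the associated whole-line Jacobi matrix on ℓ²(ℤ, ℂ). Then the following are equivalent: (i) for every z ∈ ℂ with Im z ≠ 0, the map n ↦ ⟨δ_n, (H − z)⁻¹ δ_n⟩ is constant in n ∈ ℤ (equivalently, all spectral measures μ_n of H and δ_n coincide); (ii) ⟨δ_n, H δ_n⟩ and ⟨δ_n, H² δ_n⟩ are constant in n ∈ ℤ; (iii) there exist a, c ≥ 0 and b ∈ ℝ such that a_{2n} = a, a_{2n+1} = c, and b_n = b for all n ∈ ℤ. -/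
/-!
The diagonal entries of `H` and `H²` at `n` are `b n` and `a (n-1)² + b n² + a n²`, so (ii) says
that `b` is constant and `a (n-1)² + a n²` is constant, i.e. (as `a ≥ 0`) that `a` is 2-periodic,
which is (iii). Under (iii) each reflection `n ↦ 2k+1-n` of `ℤ` induces an isometry of `ℓ²(ℤ)`
commuting with `H`, hence with `(H - z)⁻¹`; these reflections act transitively on `ℤ`, giving (i).
Conversely, `(H - z) R = 1` gives `H R = 1 + z R`, and `R = (H - z)⁻¹ → 0` as `z → ∞`; so a
continuous functional `φ` vanishing on all resolvents has `φ 1 = 0`, and `φ (H * ·)` again vanishes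
on all resolvents. By induction `φ (H ^ k) = 0` for all `k`; for
`φ T = ⟪δ p, T δ p⟫ - ⟪δ q, T δ q⟫` this gives (ii) from (i).
-/

open MeasureTheory Filter Metric Complex Set Topology

noncomputable section

/-- `ℓ²(ℤ, ℂ)`. -/
abbrev ZSeq := lp (fun _ : ℤ => ℂ) 2

/-- The standard orthonormal basis vector `δ_n` of `ℓ²(ℤ, ℂ)`. -/
def deltaZ (n : ℤ) : ZSeq := lp.single 2 n (1 : ℂ)

open scoped InnerProductSpace lp

section BanachAlgebra

variable {A : Type*} [NormedRing A] [NormedAlgebra ℂ A] [CompleteSpace A]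

lemma mul_eq_one_add_smul_of_sub_smul_one_mul_eq_one {R B : Type*} [CommRing R] [Ring B]
    [Algebra R B] {a r : B} {z : R} (h : (a - z • 1) * r = 1) : a * r = 1 + z • r := by
  rw [← h, sub_mul, smul_one_mul]
  abel

lemma eventually_neg_resolvent_isInverse (a : A) :
    ∀ᶠ z in Bornology.cobounded ℂ,
      (a - z • 1) * -resolvent a z = 1 ∧ -resolvent a z * (a - z • 1) = 1 := by
  filter_upwards [spectrum.isBounded (𝕜 := ℂ) a] with z hz
  have hu : IsUnit (algebraMap ℂ A z - a) := spectrum.notMem_iff.mp hz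
  have hneg : a - z • 1 = -(algebraMap ℂ A z - a) := by
    rw [Algebra.algebraMap_eq_smul_one]
    abel
  rw [hneg, resolvent, neg_mul_neg, neg_mul_neg]
  exact ⟨Ring.mul_inverse_cancel _ hu, Ring.inverse_mul_cancel _ hu⟩

lemma tendsto_ofReal_mul_I_cobounded :
    Tendsto (fun t : ℝ => (t : ℂ) * I) atTop (Bornology.cobounded ℂ) := by
  rw [← tendsto_norm_atTop_iff_cobounded]
  simpa using tendsto_abs_atTop_atTop

def VanishesOnNonrealInverses (a : A) (φ : A →L[ℂ] ℂ) : Prop :=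
  ∀ z : ℂ, z.im ≠ 0 → ∀ r : A, (a - z • 1) * r = 1 → r * (a - z • 1) = 1 → φ r = 0

namespace VanishesOnNonrealInverses

variable {a : A} {φ : A →L[ℂ] ℂ}

lemma map_one (h : VanishesOnNonrealInverses a φ) : φ 1 = 0 := by
  set z : ℝ → ℂ := fun t => (t : ℂ) * I
  have hr : Tendsto (fun t => -resolvent a (z t)) atTop (𝓝 0) := by
    simpa using ((spectrum.resolvent_tendsto_cobounded a).comp
      tendsto_ofReal_mul_I_cobounded).neg
  have hlim : Tendsto (fun t => φ (a * -resolvent a (z t))) atTop (𝓝 0) := by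
    have := ((φ.continuous.comp (continuous_const_mul a)).tendsto 0).comp hr
    rwa [Function.comp_apply, mul_zero, map_zero] at this
  refine tendsto_nhds_unique (tendsto_const_nhds.congr' ?_) hlim
  filter_upwards [eventually_gt_atTop 0,
    tendsto_ofReal_mul_I_cobounded.eventually (eventually_neg_resolvent_isInverse a)]
    with t ht ⟨h1, h2⟩
  have hz : (z t).im ≠ 0 := by simpa [z] using ht.ne'
  rw [mul_eq_one_add_smul_of_sub_smul_one_mul_eq_one h1, map_add, map_smul, h _ hz _ h1 h2,
    smul_zero, add_zero]

lemma comp_mul (h : VanishesOnNonrealInverses a φ) :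
    VanishesOnNonrealInverses a (φ.comp (ContinuousLinearMap.mul ℂ A a)) := by
  intro z hz r h1 h2
  rw [ContinuousLinearMap.comp_apply, ContinuousLinearMap.mul_apply',
    mul_eq_one_add_smul_of_sub_smul_one_mul_eq_one h1, map_add, map_smul, h.map_one,
    h z hz r h1 h2, smul_zero, add_zero]

lemma map_pow (h : VanishesOnNonrealInverses a φ) (n : ℕ) : φ (a ^ n) = 0 := by
  induction n generalizing φ with
  | zero => simpa using h.map_one
  | succ n ih => simpa [pow_succ'] using ih h.comp_mul

end VanishesOnNonrealInverses

end BanachAlgebra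

lemma inner_pow_apply_eq_of_inner_inverse_eq {E : Type*} [NormedAddCommGroup E]
    [InnerProductSpace ℂ E] [CompleteSpace E] {H : E →L[ℂ] E} {u v : E}
    (h : ∀ z : ℂ, z.im ≠ 0 → ∀ R : E →L[ℂ] E, (H - z • 1) * R = 1 → R * (H - z • 1) = 1 →
      ⟪u, R u⟫_ℂ = ⟪v, R v⟫_ℂ) (n : ℕ) :
    ⟪u, (H ^ n) u⟫_ℂ = ⟪v, (H ^ n) v⟫_ℂ := by
  set φ : (E →L[ℂ] E) →L[ℂ] ℂ := innerSL ℂ u ∘L ContinuousLinearMap.apply ℂ E u -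
    innerSL ℂ v ∘L ContinuousLinearMap.apply ℂ E v
  have hφ : VanishesOnNonrealInverses H φ := fun z hz R h1 h2 => by
    simpa [φ, sub_eq_zero] using h z hz R h1 h2
  simpa [φ, sub_eq_zero] using hφ.map_pow n

section Reindex

variable {ι κ 𝕜 : Type*} [RCLike 𝕜]

lemma memℓp_comp_equiv (e : ι ≃ κ) (x : ℓ²(κ, 𝕜)) : Memℓp (fun i => x (e i)) 2 := by
  have hx := lp.memℓp x
  rw [memℓp_gen_iff (by norm_num)] at hx ⊢
  exact e.summable_iff.mpr hx

def l2CompEquiv (e : ι ≃ κ) : ℓ²(κ, 𝕜) →ₗᵢ[𝕜] ℓ²(ι, 𝕜) where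
  toFun x := ⟨fun i => x (e i), memℓp_comp_equiv e x⟩
  map_add' _ _ := rfl
  map_smul' _ _ := rfl
  norm_map' x := by
    rw [lp.norm_eq_tsum_rpow (by norm_num), lp.norm_eq_tsum_rpow (by norm_num)]
    congr 1
    exact e.tsum_eq (fun k => ‖x k‖ ^ (2 : ENNReal).toReal)

@[simp]
lemma l2CompEquiv_apply (e : ι ≃ κ) (x : ℓ²(κ, 𝕜)) (i : ι) : l2CompEquiv e x i = x (e i) := rfl

end Reindex

lemma inner_map_apply_map_eq_of_commute {𝕜 E : Type*} [RCLike 𝕜] [NormedAddCommGroup E]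
    [InnerProductSpace 𝕜 E] (U : E →ₗᵢ[𝕜] E) {T R : E →L[𝕜] E}
    (hU : Commute U.toContinuousLinearMap T) (hTR : T * R = 1) (hRT : R * T = 1) (x : E) :
    ⟪U x, R (U x)⟫_𝕜 = ⟪x, R x⟫_𝕜 := by
  have hUR : Commute U.toContinuousLinearMap R :=
    hU.units_inv_right (u := ⟨T, R, hTR, hRT⟩)
  have hRU : R (U x) = U (R x) := congr($(hUR.eq.symm) x)
  rw [hRU]
  exact U.inner_map_map x (R x)

lemma inner_deltaZ_left (m : ℤ) (x : ZSeq) : ⟪deltaZ m, x⟫_ℂ = x m := by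
  simp [deltaZ, lp.inner_single_left]

lemma deltaZ_apply (n m : ℤ) : deltaZ n m = if m = n then 1 else 0 := by
  simp [deltaZ, lp.single_apply, Pi.single_apply]

lemma inner_deltaZ_l2CompEquiv (e : ℤ ≃ ℤ) (p : ℤ) (x : ZSeq) :
    ⟪deltaZ p, l2CompEquiv e x⟫_ℂ = ⟪deltaZ (e p), x⟫_ℂ := by
  rw [inner_deltaZ_left, inner_deltaZ_left, l2CompEquiv_apply]

lemma ext_inner_deltaZ {A B : ZSeq →L[ℂ] ZSeq}
    (h : ∀ p q, ⟪deltaZ p, A (deltaZ q)⟫_ℂ = ⟪deltaZ p, B (deltaZ q)⟫_ℂ) : A = B := by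
  refine lp.ext_continuousLinearMap (by norm_num) fun q => ContinuousLinearMap.ext_ring ?_
  ext p
  change A (deltaZ q) p = B (deltaZ q) p
  simpa [inner_deltaZ_left] using h p q

lemma l2CompEquiv_subLeft_deltaZ (c q : ℤ) :
    l2CompEquiv (Equiv.subLeft c) (deltaZ q) = deltaZ (c - q) := by
  ext n
  simp only [l2CompEquiv_apply, Equiv.subLeft_apply, deltaZ_apply]
  congr 1
  exact propext (by omega)

lemma Function.Periodic.int_two_mul_sub_eq {a : ℤ → ℝ} (ha : Function.Periodic a 2) (k m : ℤ) :
    a (2 * k - m) = a m := by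
  rw [show 2 * k - m = m + (k - m) * 2 by ring]
  exact ha.int_mul (k - m) m

lemma forall_sq_add_sq_eq_iff_periodic {a : ℤ → ℝ} (ha : ∀ n, 0 ≤ a n) :
    (∀ p q : ℤ, a (p - 1) ^ 2 + a p ^ 2 = a (q - 1) ^ 2 + a q ^ 2) ↔ Function.Periodic a 2 := by
  constructor
  · intro h n
    have := h (n + 2) (n + 1)
    rw [show n + 2 - 1 = n + 1 by ring, show n + 1 - 1 = n by ring] at this
    exact (sq_eq_sq₀ (ha _) (ha _)).mp (by linarith)
  · intro h
    have h1 : Function.Periodic (fun p : ℤ => a (p - 1) ^ 2 + a p ^ 2) 1 := fun p => by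
      simp only [add_sub_cancel_right]
      rw [← h (p - 1), show p - 1 + 2 = p + 1 by ring, add_comm]
    intro p q
    simpa using (h1.int_mul_eq p).trans (h1.int_mul_eq q).symm

lemma exists_even_odd_const_iff {a b : ℤ → ℝ} (ha : ∀ n, 0 ≤ a n) :
    (∃ a' c' b' : ℝ, 0 ≤ a' ∧ 0 ≤ c' ∧ ∀ n : ℤ, a (2 * n) = a' ∧ a (2 * n + 1) = c' ∧ b n = b') ↔
      Function.Periodic a 2 ∧ ∀ n, b n = b 0 := by
  constructor
  · rintro ⟨a', c', b', -, -, h⟩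
    refine ⟨fun n => ?_, fun n => (h n).2.2.trans (h 0).2.2.symm⟩
    obtain ⟨m, rfl | rfl⟩ := Int.even_or_odd' n
    · rw [show 2 * m + 2 = 2 * (m + 1) by ring, (h _).1, (h m).1]
    · rw [show 2 * m + 1 + 2 = 2 * (m + 1) + 1 by ring, (h _).2.1, (h m).2.1]
  · rintro ⟨hper, hb⟩
    refine ⟨a 0, a 1, b 0, ha 0, ha 1, fun n => ⟨?_, ?_, hb n⟩⟩
    · simpa [mul_comm] using hper.int_mul_eq n
    · simpa [add_comm, mul_comm] using hper.int_mul n 1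

def IsJacobi (a b : ℤ → ℝ) (H : ZSeq →L[ℂ] ZSeq) : Prop :=
  ∀ p q : ℤ, ⟪deltaZ p, H (deltaZ q)⟫_ℂ =
    if p = q then (b q : ℂ) else if p = q + 1 ∨ q = p + 1 then (a (min p q) : ℂ) else 0

namespace IsJacobi

variable {a b : ℤ → ℝ} {H : ZSeq →L[ℂ] ZSeq}

lemma apply_deltaZ (hH : IsJacobi a b H) (p : ℤ) :
    H (deltaZ p) = (a (p - 1) : ℂ) • deltaZ (p - 1) + (b p : ℂ) • deltaZ p +
      (a p : ℂ) • deltaZ (p + 1) := by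
  ext m
  rw [← inner_deltaZ_left, hH]
  simp only [lp.coeFn_add, lp.coeFn_smul, Pi.add_apply, Pi.smul_apply, deltaZ_apply, smul_eq_mul]
  split_ifs <;> first | omega | (subst_vars; simp)

lemma inner_apply_deltaZ (hH : IsJacobi a b H) (p : ℤ) : ⟪deltaZ p, H (deltaZ p)⟫_ℂ = b p := by
  simpa using hH p p

lemma inner_apply_apply_deltaZ (hH : IsJacobi a b H) (p : ℤ) :
    ⟪deltaZ p, H (H (deltaZ p))⟫_ℂ = ((a (p - 1) ^ 2 + b p ^ 2 + a p ^ 2 : ℝ) : ℂ) := by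
  rw [hH.apply_deltaZ p]
  simp only [map_add, map_smul, inner_add_right, inner_smul_right, hH p]
  simp [show p ≠ p - 1 by omega, sq]


lemma commute_reflection (hH : IsJacobi a b H) (ha : Function.Periodic a 2)
    (hb : ∀ n, b n = b 0) (k : ℤ) :
    Commute (l2CompEquiv (Equiv.subLeft (2 * k + 1))).toContinuousLinearMap H := by
  refine ext_inner_deltaZ fun p q => ?_
  change ⟪deltaZ p, l2CompEquiv _ (H (deltaZ q))⟫_ℂ = ⟪deltaZ p, H (l2CompEquiv _ (deltaZ q))⟫_ℂ
  rw [inner_deltaZ_l2CompEquiv, l2CompEquiv_subLeft_deltaZ, Equiv.subLeft_apply, hH, hH]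
  by_cases hdiag : 2 * k + 1 - p = q
  · rw [if_pos hdiag, if_pos (show p = 2 * k + 1 - q by omega), hb q, hb (2 * k + 1 - q)]
  by_cases hadj : 2 * k + 1 - p = q + 1 ∨ q = 2 * k + 1 - p + 1
  · rw [if_neg hdiag, if_pos hadj, if_neg (show p ≠ 2 * k + 1 - q by omega),
      if_pos (show p = 2 * k + 1 - q + 1 ∨ 2 * k + 1 - q = p + 1 by omega),
      show min p (2 * k + 1 - q) = 2 * k - min (2 * k + 1 - p) q by omega,
      ha.int_two_mul_sub_eq]
  · rw [if_neg hdiag, if_neg hadj, if_neg (show p ≠ 2 * k + 1 - q by omega),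
      if_neg (show ¬(p = 2 * k + 1 - q + 1 ∨ 2 * k + 1 - q = p + 1) by omega)]

lemma inner_inverse_deltaZ_eq (hH : IsJacobi a b H) (ha : Function.Periodic a 2)
    (hb : ∀ n, b n = b 0) {z : ℂ} {R : ZSeq →L[ℂ] ZSeq} (hHR : (H - z • 1) * R = 1)
    (hRH : R * (H - z • 1) = 1) (p q : ℤ) :
    ⟪deltaZ p, R (deltaZ p)⟫_ℂ = ⟪deltaZ q, R (deltaZ q)⟫_ℂ := by
  have reflect : ∀ k r : ℤ,
      ⟪deltaZ (2 * k + 1 - r), R (deltaZ (2 * k + 1 - r))⟫_ℂ = ⟪deltaZ r, R (deltaZ r)⟫_ℂ := by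
    intro k r
    have hU := (hH.commute_reflection ha hb k).sub_right ((Commute.one_right _).smul_right z)
    simpa only [l2CompEquiv_subLeft_deltaZ] using
      inner_map_apply_map_eq_of_commute _ hU hHR hRH (deltaZ r)
  obtain ⟨k, hk | hk⟩ := Int.even_or_odd' (q - p)
  · rw [← reflect 0 p, ← reflect k (2 * 0 + 1 - p), show 2 * k + 1 - (2 * 0 + 1 - p) = q by omega]
  · rw [← reflect (k + p) p, show 2 * (k + p) + 1 - p = q by omega]

lemma diag_moments_const_iff (hH : IsJacobi a b H) (ha : ∀ n, 0 ≤ a n) :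
    (∀ p q : ℤ, ⟪deltaZ p, H (deltaZ p)⟫_ℂ = ⟪deltaZ q, H (deltaZ q)⟫_ℂ ∧
      ⟪deltaZ p, H (H (deltaZ p))⟫_ℂ = ⟪deltaZ q, H (H (deltaZ q))⟫_ℂ) ↔
      Function.Periodic a 2 ∧ ∀ n, b n = b 0 := by
  simp only [hH.inner_apply_deltaZ, hH.inner_apply_apply_deltaZ, Complex.ofReal_inj]
  rw [← forall_sq_add_sq_eq_iff_periodic ha]
  constructor
  · intro h
    have hb : ∀ n, b n = b 0 := fun n => (h n 0).1
    refine ⟨fun p q => ?_, hb⟩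
    have := (h p q).2
    rw [hb p, hb q] at this
    linarith
  · rintro ⟨ha2, hb⟩ p q
    rw [hb p, hb q]
    exact ⟨rfl, by linarith [ha2 p q]⟩

end IsJacobi

theorem statement15_general
    (a b : ℤ → ℝ) (ha : ∀ n, 0 ≤ a n)
    (H : ZSeq →L[ℂ] ZSeq)
    (hH : ∀ p q : ℤ, inner (𝕜 := ℂ) (deltaZ p) (H (deltaZ q)) =
      if p = q then (b q : ℂ)
      else if p = q + 1 ∨ q = p + 1 then (a (min p q) : ℂ) else 0) :
    ((∀ z : ℂ, z.im ≠ 0 → ∀ R : ZSeq →L[ℂ] ZSeq,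
        ((H - z • (1 : ZSeq →L[ℂ] ZSeq)) ∘L R = 1 ∧ R ∘L (H - z • 1) = 1) →
        ∀ p q : ℤ, inner (𝕜 := ℂ) (deltaZ p) (R (deltaZ p)) =
          inner (𝕜 := ℂ) (deltaZ q) (R (deltaZ q))) ↔
      (∃ a' c' b' : ℝ, 0 ≤ a' ∧ 0 ≤ c' ∧
        ∀ n : ℤ, a (2 * n) = a' ∧ a (2 * n + 1) = c' ∧ b n = b')) ∧
    ((∀ p q : ℤ,
        inner (𝕜 := ℂ) (deltaZ p) (H (deltaZ p)) =
          inner (𝕜 := ℂ) (deltaZ q) (H (deltaZ q)) ∧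
        inner (𝕜 := ℂ) (deltaZ p) (H (H (deltaZ p))) =
          inner (𝕜 := ℂ) (deltaZ q) (H (H (deltaZ q)))) ↔
      (∃ a' c' b' : ℝ, 0 ≤ a' ∧ 0 ≤ c' ∧
        ∀ n : ℤ, a (2 * n) = a' ∧ a (2 * n + 1) = c' ∧ b n = b')) := by
  have hJ : IsJacobi a b H := hH
  have moments_iff := (hJ.diag_moments_const_iff ha).trans (exists_even_odd_const_iff ha).symm
  refine ⟨⟨fun hres => moments_iff.1 fun p q => ?_, fun hper => ?_⟩, moments_iff⟩
  · have hpow := inner_pow_apply_eq_of_inner_inverse_eq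
      (fun z hz R h1 h2 => hres z hz R ⟨h1, h2⟩ p q)
    exact ⟨by simpa using hpow 1, by simpa [sq] using hpow 2⟩
  · obtain ⟨ha2, hb⟩ := (exists_even_odd_const_iff ha).1 hper
    exact fun z _ R hR p q => hJ.inner_inverse_deltaZ_eq ha2 hb hR.1 hR.2 p q

theorem statement15
    (a b : ℤ → ℝ) (ha : ∀ n, 0 ≤ a n)
    (hbd : ∃ C : ℝ, ∀ n, a n ≤ C ∧ |b n| ≤ C)
    (H : ZSeq →L[ℂ] ZSeq) (hSA : IsSelfAdjoint H)
    (hH : ∀ p q : ℤ, inner (𝕜 := ℂ) (deltaZ p) (H (deltaZ q)) =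
      if p = q then (b q : ℂ)
      else if p = q + 1 ∨ q = p + 1 then (a (min p q) : ℂ) else 0) :
    ((∀ z : ℂ, z.im ≠ 0 → ∀ R : ZSeq →L[ℂ] ZSeq,
        ((H - z • (1 : ZSeq →L[ℂ] ZSeq)) ∘L R = 1 ∧ R ∘L (H - z • 1) = 1) →
        ∀ p q : ℤ, inner (𝕜 := ℂ) (deltaZ p) (R (deltaZ p)) =
          inner (𝕜 := ℂ) (deltaZ q) (R (deltaZ q))) ↔
      (∃ a' c' b' : ℝ, 0 ≤ a' ∧ 0 ≤ c' ∧
        ∀ n : ℤ, a (2 * n) = a' ∧ a (2 * n + 1) = c' ∧ b n = b')) ∧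
    ((∀ p q : ℤ,
        inner (𝕜 := ℂ) (deltaZ p) (H (deltaZ p)) =
          inner (𝕜 := ℂ) (deltaZ q) (H (deltaZ q)) ∧
        inner (𝕜 := ℂ) (deltaZ p) (H (H (deltaZ p))) =
          inner (𝕜 := ℂ) (deltaZ q) (H (H (deltaZ q)))) ↔
      (∃ a' c' b' : ℝ, 0 ≤ a' ∧ 0 ≤ c' ∧
        ∀ n : ℤ, a (2 * n) = a' ∧ a (2 * n + 1) = c' ∧ b n = b')) :=
  statement15_general a b ha H hH

end
end

section
/- Let (a_n)_{n≥1} with a_n ≥ 0 and (b_n)_{n≥1} ⊆ ℝ be the parameters of a half-line Jacobi matrix (with the convention a_0 = 0), so that the first and second moments of the spectral measures μ_n satisfy ∫x dμ_n(x) = b_n and ∫x² dμ_n(x) = a_{n−1}² + b_n² + a_n². Suppose lim_{n→∞} b_n = B̃ and lim_{n→∞} (a_{n−1}² + b_n² + a_n²) = Ã. Then the sequences (a_n) and (b_n) are bounded (so the Jacobi matrix is a bounded operator), and every right limit of the parameter sequence lies in the class 𝒮(Ã − B̃², B̃): for every pair of doubly infinite sequences ((ã_n), (b̃_n))_{n∈ℤ}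 obtained as pointwise limits ã_n = lim_j a_{n+n_j}, b̃_n = lim_j b_{n+n_j} along some integers n_j → ∞, there exist constants a, c ≥ 0 with a² + c² = Ã − B̃² such that ã_{2n} = a, ã_{2n+1} = c, and b̃_n = B̃ for all n ∈ ℤ. -/
open MeasureTheory Filter Metric Complex Set Topology

noncomputable section

/-! The second moments `a_{n-1}² + b_n² + a_n²` are bounded, which bounds `a`. Along a right
limit, `b̃ ≡ B̃` and `ã_{n-1}² + ã_n² = Ã - B̃²` for every `n`; comparing this at `n` and `n + 1`
gives `ã_{n+1}² = ã_{n-1}²`, so the nonnegative sequence `ã` has period two. -/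

lemma exists_bound_of_tendsto_secondMoment {a b : ℕ → ℝ} {A B : ℝ}
    (hb : Tendsto b atTop (𝓝 B))
    (hm2 : Tendsto (fun n => a (n - 1) ^ 2 + b n ^ 2 + a n ^ 2) atTop (𝓝 A)) :
    ∃ C : ℝ, ∀ n, a n ≤ C ∧ |b n| ≤ C := by
  obtain ⟨Mb, hMb⟩ := hb.abs.bddAbove_range
  obtain ⟨M, hM⟩ := hm2.bddAbove_range
  refine ⟨max √M Mb, fun n => ⟨?_, ?_⟩⟩
  · have hsq : a n ^ 2 ≤ M := by
      have := hM (Set.mem_range_self n)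
      linarith [sq_nonneg (a (n - 1)), sq_nonneg (b n)]
    exact (le_abs_self _).trans <| (Real.abs_le_sqrt hsq).trans (le_max_left _ _)
  · exact (hMb (Set.mem_range_self n)).trans (le_max_right _ _)

lemma periodic_two_of_sq_add_sq_eq {x : ℤ → ℝ} {S : ℝ} (hx : ∀ n, 0 ≤ x n)
    (h : ∀ n, x n ^ 2 + x (n + 1) ^ 2 = S) : Function.Periodic x 2 := by
  intro n
  have hsq : x (n + 2) ^ 2 = x n ^ 2 := by
    have h₁ := h (n + 1)
    rw [add_assoc, one_add_one_eq_two] at h₁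
    linarith [h n]
  exact (pow_left_inj₀ (hx _) (hx _) two_ne_zero).1 hsq

section Shift

variable {ι : Type*} {l : Filter ι} {nj : ι → ℕ}

lemma tendsto_toNat_int_add (hnj : Tendsto nj l atTop) (n : ℤ) :
    Tendsto (fun j => (n + nj j).toNat) l atTop := by
  refine tendsto_atTop.2 fun K => ?_
  filter_upwards [hnj.eventually_ge_atTop (K + n.natAbs)] with j hj
  omega

lemma eq_of_tendsto_comp_toNat_int_add [l.NeBot] {X : Type*} [TopologicalSpace X] [T2Space X]
    {u : ℕ → X} {L β : X} (hu : Tendsto u atTop (𝓝 L)) (hnj : Tendsto nj l atTop) (n : ℤ)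
    (h : Tendsto (fun j => u (n + nj j).toNat) l (𝓝 β)) : β = L :=
  tendsto_nhds_unique h (hu.comp (tendsto_toNat_int_add hnj n))

lemma secondMoment_eq_of_rightLimit [l.NeBot] {a b : ℕ → ℝ} {A : ℝ}
    (hm2 : Tendsto (fun n => a (n - 1) ^ 2 + b n ^ 2 + a n ^ 2) atTop (𝓝 A))
    (hnj : Tendsto nj l atTop) {atil btil : ℤ → ℝ} (n : ℤ)
    (ha₀ : Tendsto (fun j => a (n - 1 + nj j).toNat) l (𝓝 (atil (n - 1))))
    (ha₁ : Tendsto (fun j => a (n + nj j).toNat) l (𝓝 (atil n)))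
    (hb : Tendsto (fun j => b (n + nj j).toNat) l (𝓝 (btil n))) :
    atil (n - 1) ^ 2 + btil n ^ 2 + atil n ^ 2 = A := by
  -- truncated subtraction agrees with the integer shift once `n + nj j ≥ 1`
  have hshift : ∀ᶠ j in l, (n + nj j).toNat - 1 = (n - 1 + nj j).toNat := by
    filter_upwards [hnj.eventually_ge_atTop (n.natAbs + 1)] with j hj
    omega
  refine tendsto_nhds_unique (((ha₀.pow 2).add (hb.pow 2)).add (ha₁.pow 2)) ?_
  refine (hm2.comp (tendsto_toNat_int_add hnj n)).congr' ?_
  filter_upwards [hshift] with j hj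
  simp only [Function.comp_apply, hj]

end Shift

theorem statement16_general
    (a b : ℕ → ℝ) (ha : ∀ n, 0 ≤ a n)
    (Atil Btil : ℝ)
    (hb : Tendsto (fun n => b n) atTop (𝓝 Btil))
    (hm2 : Tendsto (fun n => a (n - 1) ^ 2 + b n ^ 2 + a n ^ 2) atTop (𝓝 Atil)) :
    (∃ C : ℝ, ∀ n, a n ≤ C ∧ |b n| ≤ C) ∧
    (∀ atil btil : ℤ → ℝ, ∀ nj : ℕ → ℕ, Tendsto nj atTop atTop →
      (∀ n : ℤ, Tendsto (fun j => a (n + nj j).toNat) atTop (𝓝 (atil n)) ∧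
        Tendsto (fun j => b (n + nj j).toNat) atTop (𝓝 (btil n))) →
      ∃ a' c' : ℝ, 0 ≤ a' ∧ 0 ≤ c' ∧ a' ^ 2 + c' ^ 2 = Atil - Btil ^ 2 ∧
        ∀ n : ℤ, atil (2 * n) = a' ∧ atil (2 * n + 1) = c' ∧ btil n = Btil) := by
  refine ⟨exists_bound_of_tendsto_secondMoment hb hm2, fun atil btil nj hnj hlim => ?_⟩
  have hbtil (n : ℤ) : btil n = Btil := eq_of_tendsto_comp_toNat_int_add hb hnj n (hlim n).2
  have hatil (n : ℤ) : 0 ≤ atil n := ge_of_tendsto' (hlim n).1 fun _ => ha _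
  have hsum (n : ℤ) : atil n ^ 2 + atil (n + 1) ^ 2 = Atil - Btil ^ 2 := by
    have := secondMoment_eq_of_rightLimit hm2 hnj (n + 1)
      (hlim (n + 1 - 1)).1 (hlim (n + 1)).1 (hlim (n + 1)).2
    rw [add_sub_cancel_right, hbtil] at this
    linarith
  have hper := periodic_two_of_sq_add_sq_eq hatil hsum
  refine ⟨atil 0, atil 1, hatil 0, hatil 1, hsum 0, fun n => ⟨?_, ?_, hbtil n⟩⟩
  · rw [mul_comm]
    exact hper.int_mul_eq n
  · rw [add_comm, mul_comm]
    exact hper.int_mul n 1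

theorem statement16
    (a b : ℕ → ℝ) (ha : ∀ n, 0 ≤ a n) (ha0 : a 0 = 0)
    (Atil Btil : ℝ)
    (hb : Tendsto (fun n => b n) atTop (𝓝 Btil))
    (hm2 : Tendsto (fun n => a (n - 1) ^ 2 + b n ^ 2 + a n ^ 2) atTop (𝓝 Atil)) :
    (∃ C : ℝ, ∀ n, a n ≤ C ∧ |b n| ≤ C) ∧
    (∀ atil btil : ℤ → ℝ, ∀ nj : ℕ → ℕ, Tendsto nj atTop atTop →
      (∀ n : ℤ, Tendsto (fun j => a (n + nj j).toNat) atTop (𝓝 (atil n)) ∧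
        Tendsto (fun j => b (n + nj j).toNat) atTop (𝓝 (btil n))) →
      ∃ a' c' : ℝ, 0 ≤ a' ∧ 0 ≤ c' ∧ a' ^ 2 + c' ^ 2 = Atil - Btil ^ 2 ∧
        ∀ n : ℤ, atil (2 * n) = a' ∧ atil (2 * n + 1) = c' ∧ btil n = Btil) :=
  statement16_general a b ha Atil Btil hb hm2

end
end

section
/- Let μ be a probability measure on ∂𝔻 with infinite support, with monic orthogonal polynomials Φ_n, reversed polynomials Φ_n*, and Verblunsky coefficients (α_n)_{n≥0}. (a) If for some z₀ ∈ 𝔻, z₀ ≠ 0, the ratio asymptotics lim_{n→∞} Φ*_{n+1}(z₀)/Φ*_n(z₀) = 1 holds, then every right limit (β_n)_{n∈ℤ} of (α_n) has at most one nonzero entry (i.e., all right limits lie in the class 𝒦(∞)). (b) If the limits lim_{n→∞} Φ*_{n+1}(z_i)/Φ*_n(z_i) exist at two points z₁, z₂ ∈ 𝔻 \ {0} and neither limit equals 1, then there exists c ≠ 0 with |c| ≤ 1 such that every right limit (β_n)_{n∈ℤ} of (α_n) satisfies |β_n| = √|c| and conj(β_{n+1})·β_n = −c for all n ∈ ℤ;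 in particular, the right limit is unique up to multiplication by a constant phase and lies in the class 𝒦̃(c,1). -/
open MeasureTheory Filter Metric Complex Set Topology

noncomputable section

/-!
Fix `z ∈ 𝔻` and put `b_n = Φ_n(z) / Φ*_n(z)`. The Szegő recursion keeps `|b_n| ≤ 1`, and
`Φ*_{n+1}(z) / Φ*_n(z) = 1 - α_n z b_n`, `b_{n+1} (1 - α_n z b_n) = z b_n - conj α_n`.
Along a subsequence realising a right limit `β` on which also `b_{n+k} → L_n`, these become
`β_n z L_n = 1 - G` and `L_{n+1} G = z L_n - conj β_n`, where `G` is the limit of the ratios.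

If `G = 1` then `β_n L_n = 0`, so after a nonzero entry `β_a` we get `L_{a+1+k} = -z^k conj β_a ≠ 0`
and all later entries vanish. If `G ≠ 1` then no `β_n` vanishes and eliminating `L` gives
`G (1 - G) β_n = z β_{n+1} (1 - G - |β_n|²)`. Two such relations at distinct points determine
`β_{n+1} / β_n` and then `conj β_n β_{n+1}` as constants depending only on the points and the
limits.
-/

open Polynomial ComplexConjugate

theorem szegoRev_szegoRev (n : ℕ) (P : ℂ[X]) : szegoRev n (szegoRev n P) = P := by
  simp [szegoRev, ← reflect_map, Polynomial.map_map]

theorem szegoRev_sub (n : ℕ) (P Q : ℂ[X]) :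
    szegoRev n (P - Q) = szegoRev n P - szegoRev n Q := by
  simp [szegoRev, reflect_sub]

theorem szegoRev_C_mul (n : ℕ) (a : ℂ) (P : ℂ[X]) :
    szegoRev n (C a * P) = C (conj a) * szegoRev n P := by
  simp [szegoRev, reflect_C_mul]

theorem szegoRev_X_mul {n : ℕ} {P : ℂ[X]} (hP : P.natDegree ≤ n) :
    szegoRev (n + 1) (X * P) = szegoRev n P := by
  rw [szegoRev, szegoRev, Polynomial.map_mul, map_X, add_comm,
    reflect_mul _ _ natDegree_X_le (natDegree_map_le.trans hP), reflect_one_X, one_mul]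

theorem szegoRev_szego_step {n : ℕ} {P : ℂ[X]} (hP : P.natDegree ≤ n) (a : ℂ) :
    szegoRev (n + 1) (X * P - C (conj a) * szegoRev n P) = szegoRev n P - C a * (X * P) := by
  have hinv : szegoRev (n + 1) (szegoRev n P) = X * P := by
    rw [← szegoRev_X_mul hP, szegoRev_szegoRev]
  rw [szegoRev_sub, szegoRev_C_mul, szegoRev_X_mul hP, hinv, Complex.conj_conj]

theorem norm_sub_conj_mul_le {a w q : ℂ} (ha : ‖a‖ ≤ 1) (hw : ‖w‖ ≤ ‖q‖) :
    ‖w - conj a * q‖ ≤ ‖q - a * w‖ := by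
  have key : ‖q - a * w‖ ^ 2 - ‖w - conj a * q‖ ^ 2 = (1 - ‖a‖ ^ 2) * (‖q‖ ^ 2 - ‖w‖ ^ 2) := by
    simp only [Complex.sq_norm, Complex.normSq_apply, Complex.sub_re, Complex.sub_im,
      Complex.mul_re, Complex.mul_im, Complex.conj_re, Complex.conj_im]
    ring
  have ha2 : ‖a‖ ^ 2 ≤ 1 := pow_le_one₀ (norm_nonneg a) ha
  have hw2 : ‖w‖ ^ 2 ≤ ‖q‖ ^ 2 := pow_le_pow_left₀ (norm_nonneg w) hw 2
  exact pow_le_pow_iff_left₀ (norm_nonneg _) (norm_nonneg _) two_ne_zero |>.mp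
    (by nlinarith)

section SzegoRecursion

variable {α : ℕ → ℂ} {z : ℂ} {p q : ℕ → ℂ}

theorem ne_zero_and_norm_le_of_szego_recursion (hα : ∀ n, ‖α n‖ ≤ 1) (hz : ‖z‖ < 1)
    (hp : ∀ n, p (n + 1) = z * p n - conj (α n) * q n)
    (hq : ∀ n, q (n + 1) = q n - α n * z * p n)
    (hq0 : q 0 ≠ 0) (hpq0 : ‖p 0‖ ≤ ‖q 0‖) (n : ℕ) : q n ≠ 0 ∧ ‖p n‖ ≤ ‖q n‖ := by
  induction n with
  | zero => exact ⟨hq0, hpq0⟩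
  | succ n ih =>
    obtain ⟨hqn, hpqn⟩ := ih
    have hzp : ‖z * p n‖ ≤ ‖q n‖ :=
      (norm_mul_le _ _).trans (mul_le_of_le_one_left (norm_nonneg _) hz.le |>.trans hpqn)
    have hlt : ‖α n * z * p n‖ < ‖q n‖ := by
      rw [mul_assoc, norm_mul]
      calc ‖α n‖ * ‖z * p n‖ ≤ ‖z * p n‖ := mul_le_of_le_one_left (norm_nonneg _) (hα n)
        _ ≤ ‖z‖ * ‖q n‖ := by rw [norm_mul]; gcongr
        _ < ‖q n‖ := mul_lt_of_lt_one_left (norm_pos_iff.mpr hqn) hz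
    refine ⟨?_, ?_⟩
    · rw [hq, sub_ne_zero]
      exact fun h => hlt.ne (by rw [h])
    · rw [hp, hq, mul_assoc]
      exact norm_sub_conj_mul_le (hα n) hzp

theorem schur_relations_of_szego_recursion (hα : ∀ n, ‖α n‖ ≤ 1) (hz : ‖z‖ < 1)
    (hp : ∀ n, p (n + 1) = z * p n - conj (α n) * q n)
    (hq : ∀ n, q (n + 1) = q n - α n * z * p n)
    (hq0 : q 0 ≠ 0) (hpq0 : ‖p 0‖ ≤ ‖q 0‖) :
    (∀ m, ‖p m / q m‖ ≤ 1) ∧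
    (∀ m, q (m + 1) / q m = 1 - α m * z * (p m / q m)) ∧
    ∀ m, p (m + 1) / q (m + 1) * (q (m + 1) / q m) = z * (p m / q m) - conj (α m) := by
  have h := ne_zero_and_norm_le_of_szego_recursion hα hz hp hq hq0 hpq0
  refine ⟨fun m => ?_, fun m => ?_, fun m => ?_⟩
  · rw [norm_div]
    exact div_le_one_of_le₀ (h m).2 (norm_nonneg _)
  · rw [hq]
    field_simp [(h m).1]
  · rw [div_mul_div_cancel₀ (h (m + 1)).1, hp]
    field_simp [(h m).1]

end SzegoRecursion

theorem ne_zero_of_tendsto_one_sub_mul {α b r : ℕ → ℂ} {z G : ℂ} (hα : ∀ m, ‖α m‖ ≤ 1)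
    (hb : ∀ m, ‖b m‖ ≤ 1) (hz : ‖z‖ < 1) (hr : ∀ m, r m = 1 - α m * z * b m)
    (hG : Tendsto r atTop (𝓝 G)) : G ≠ 0 := by
  have hbound : ∀ m, 1 - ‖z‖ ≤ ‖r m‖ := fun m => by
    have : ‖α m * z * b m‖ ≤ ‖z‖ := by
      rw [norm_mul, norm_mul]
      simpa using mul_le_mul (mul_le_of_le_one_left (norm_nonneg z) (hα m)) (hb m)
        (norm_nonneg _) (norm_nonneg z)
    rw [hr]
    linarith [norm_sub_norm_le (1 : ℂ) (α m * z * b m), norm_one (α := ℂ)]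
  have := ge_of_tendsto' hG.norm hbound
  exact norm_pos_iff.mp (by linarith)

theorem exists_strictMono_tendsto_of_norm_le {ι : Type*} [Countable ι] (F : ℕ → ι → ℂ) {C : ℝ}
    (hF : ∀ j i, ‖F j i‖ ≤ C) :
    ∃ ψ : ℕ → ℕ, StrictMono ψ ∧ ∃ L : ι → ℂ, ∀ i, Tendsto (fun j => F (ψ j) i) atTop (𝓝 (L i)) := by
  have hK : IsCompact (Set.univ.pi fun _ : ι => closedBall (0 : ℂ) C) :=
    isCompact_univ_pi fun _ => isCompact_closedBall _ _
  obtain ⟨L, -, ψ, hψ, hlim⟩ := hK.isSeqCompact fun j i _ => mem_closedBall_zero_iff.mpr (hF j i)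
  exact ⟨ψ, hψ, L, tendsto_pi_nhds.mp hlim⟩

theorem tendsto_toNat_add_atTop {nj : ℕ → ℕ} (h : Tendsto nj atTop atTop) (n : ℤ) :
    Tendsto (fun j => (n + nj j).toNat) atTop atTop := by
  rw [tendsto_atTop_atTop]
  intro K
  obtain ⟨N, hN⟩ := tendsto_atTop_atTop.mp h (K + n.natAbs)
  exact ⟨N, fun j hj => by have := hN j hj; omega⟩

theorem exists_isRightLimit {α : ℕ → ℂ} {C : ℝ} (hα : ∀ n, ‖α n‖ ≤ C) :
    ∃ β : ℤ → ℂ, IsRightLimit α β := by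
  obtain ⟨ψ, hψ, L, hL⟩ :=
    exists_strictMono_tendsto_of_norm_le (fun j (n : ℤ) => α (n + j).toNat) fun _ _ => hα _
  exact ⟨L, ψ, hψ.tendsto_atTop, hL⟩

theorem IsRightLimit.norm_le {α : ℕ → ℂ} {β : ℤ → ℂ} {C : ℝ} (hβ : IsRightLimit α β)
    (hα : ∀ n, ‖α n‖ ≤ C) (n : ℤ) : ‖β n‖ ≤ C := by
  obtain ⟨nj, -, hlim⟩ := hβ
  exact le_of_tendsto' (hlim n).norm fun _ => hα _

/-- `L n` stands for the limit of `Φ_{n+k}(z) / Φ*_{n+k}(z)` along the subsequence realising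
the right limit `β`, and `G` for the limit of `Φ*_{k+1}(z) / Φ*_k(z)`. -/
def RightLimitRelations (β L : ℤ → ℂ) (z G : ℂ) : Prop :=
  ∀ n, β n * z * L n = 1 - G ∧ L (n + 1) * G = z * L n - conj (β n)

theorem IsRightLimit.exists_rightLimitRelations {α b r : ℕ → ℂ} {β : ℤ → ℂ} {z G : ℂ}
    (hβ : IsRightLimit α β) (hb : ∀ m, ‖b m‖ ≤ 1) (hr : ∀ m, r m = 1 - α m * z * b m)
    (hbr : ∀ m, b (m + 1) * r m = z * b m - conj (α m)) (hG : Tendsto r atTop (𝓝 G)) :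
    ∃ L, RightLimitRelations β L z G := by
  obtain ⟨nj, hnj, hαβ⟩ := hβ
  obtain ⟨ψ, hψ, L, hL⟩ :=
    exists_strictMono_tendsto_of_norm_le (fun j (n : ℤ) => b (n + nj j).toNat) fun _ _ => hb _
  have hk := tendsto_toNat_add_atTop (hnj.comp hψ.tendsto_atTop)
  have hα : ∀ n : ℤ, Tendsto (fun j => α (n + nj (ψ j)).toNat) atTop (𝓝 (β n)) :=
    fun n => (hαβ n).comp hψ.tendsto_atTop
  have hb1 : ∀ n : ℤ, Tendsto (fun j => b ((n + nj (ψ j)).toNat + 1)) atTop (𝓝 (L (n + 1))) :=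
    fun n => (hL (n + 1)).congr' <|
      ((hnj.comp hψ.tendsto_atTop).eventually_ge_atTop n.natAbs).mono fun j hj => by
        simp only [Function.comp_apply] at hj ⊢; congr 1; omega
  refine ⟨L, fun n => ⟨?_, ?_⟩⟩
  · have h₁ : Tendsto (fun j => r (n + nj (ψ j)).toNat) atTop (𝓝 (1 - β n * z * L n)) := by
      simp only [hr]
      exact tendsto_const_nhds.sub (((hα n).mul_const z).mul (hL n))
    linear_combination tendsto_nhds_unique (hG.comp (hk n)) h₁
  · have h₁ : Tendsto (fun j => b ((n + nj (ψ j)).toNat + 1) * r (n + nj (ψ j)).toNat) atTop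
        (𝓝 (z * L n - conj (β n))) := by
      simp only [hbr]
      exact ((hL n).const_mul z).sub ((hα n).star)
    exact tendsto_nhds_unique ((hb1 n).mul (hG.comp (hk n))) h₁

namespace RightLimitRelations

variable {β L : ℤ → ℂ} {z G : ℂ}

theorem eq_zero_of_lt (h : RightLimitRelations β L z 1) (hz : z ≠ 0) {a m : ℤ} (ha : β a ≠ 0)
    (ham : a < m) : β m = 0 := by
  have hL : ∀ n, β n ≠ 0 → L n = 0 := fun n hn => by
    simpa [hn, hz] using (h n).1
  have hchain : ∀ k : ℕ, L (a + 1 + k) = z ^ k * -conj (β a) := by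
    intro k
    induction k with
    | zero => simpa [hL a ha] using (h a).2
    | succ k ih =>
      have hne : L (a + 1 + k) ≠ 0 := by
        rw [ih]; exact mul_ne_zero (pow_ne_zero _ hz) (by simpa using ha)
      have hβk : β (a + 1 + k) = 0 := not_not.mp fun hβ => hne (hL _ hβ)
      have := (h (a + 1 + k)).2
      rw [hβk, ih, mul_one, map_zero, sub_zero] at this
      rw [Nat.cast_succ, ← add_assoc, this]
      ring
  obtain ⟨k, rfl⟩ : ∃ k : ℕ, m = a + 1 + k := ⟨(m - a - 1).toNat, by omega⟩
  by_contra hm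
  exact mul_ne_zero (pow_ne_zero _ hz) (by simpa using ha) ((hchain k).symm.trans (hL _ hm))

theorem support_subsingleton (h : RightLimitRelations β L z 1) (hz : z ≠ 0) :
    {n | β n ≠ 0}.Subsingleton := by
  intro a ha m hm
  by_contra hne
  rcases lt_or_gt_of_ne hne with hlt | hlt
  · exact hm (h.eq_zero_of_lt hz ha hlt)
  · exact ha (h.eq_zero_of_lt hz hm hlt)

end RightLimitRelations

def RatioRelation (β : ℤ → ℂ) (z G : ℂ) : Prop :=
  ∀ n, G * (1 - G) * β n = z * β (n + 1) * (1 - G - conj (β n) * β n)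

theorem RightLimitRelations.ratioRelation {β L : ℤ → ℂ} {z G : ℂ}
    (h : RightLimitRelations β L z G) (hG : G ≠ 1) :
    (∀ n, β n ≠ 0) ∧ RatioRelation β z G := by
  have hβ : ∀ n, β n ≠ 0 := fun n hn => by
    have := (h n).1
    rw [hn, zero_mul, zero_mul, eq_comm, sub_eq_zero] at this
    exact hG this.symm
  refine ⟨hβ, fun n => ?_⟩
  -- substituting `1 - G = β m * z * L m` at `m = n, n + 1` eliminates `L`
  linear_combination (z * β n * β (n + 1)) * (h n).2 - (G * β n) * (h (n + 1)).1
    + (z * β (n + 1)) * (h n).1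

/-- Obtained by eliminating `conj (β n) * β n` between the ratio relations at two points. -/
def twoPointRatio (z₁ G₁ z₂ G₂ : ℂ) : ℂ :=
  (z₂ * G₁ * (1 - G₁) - z₁ * G₂ * (1 - G₂)) / (z₁ * z₂ * (G₂ - G₁))

namespace RatioRelation

variable {β : ℤ → ℂ} {z₁ z₂ G₁ G₂ : ℂ}

theorem ne_of_ne (h₁ : RatioRelation β z₁ G₁) (h₂ : RatioRelation β z₂ G₂) (hβ : ∀ n, β n ≠ 0)
    (hz : z₁ ≠ z₂) (hG₀ : G₁ ≠ 0) (hG₁ : G₁ ≠ 1) : G₁ ≠ G₂ := by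
  rintro rfl
  have hsq : 1 - G₁ - conj (β 0) * β 0 = 0 := by
    have : (z₁ - z₂) * β (0 + 1) * (1 - G₁ - conj (β 0) * β 0) = 0 := by
      linear_combination h₂ 0 - h₁ 0
    simpa [sub_eq_zero, hz, hβ] using this
  have := h₁ 0
  rw [hsq, mul_zero] at this
  simp [hG₀, sub_eq_zero, hG₁.symm, hβ 0] at this

theorem succ_eq_twoPointRatio_mul (h₁ : RatioRelation β z₁ G₁) (h₂ : RatioRelation β z₂ G₂)
    (hz₁ : z₁ ≠ 0) (hz₂ : z₂ ≠ 0) (hG : G₁ ≠ G₂) (n : ℤ) :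
    β (n + 1) = twoPointRatio z₁ G₁ z₂ G₂ * β n := by
  rw [twoPointRatio, div_mul_eq_mul_div, eq_div_iff (by simp [hz₁, hz₂, sub_eq_zero, hG.symm])]
  linear_combination z₁ * h₂ n - z₂ * h₁ n

theorem conj_mul_succ_eq (h₁ : RatioRelation β z₁ G₁) (h₂ : RatioRelation β z₂ G₂)
    (hβ : ∀ n, β n ≠ 0) (hz₁ : z₁ ≠ 0) (hz₂ : z₂ ≠ 0) (hG : G₁ ≠ G₂) (n : ℤ) :
    conj (β n) * β (n + 1) = (1 - G₁) * (twoPointRatio z₁ G₁ z₂ G₂ - G₁ / z₁) := by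
  have hsucc := h₁.succ_eq_twoPointRatio_mul h₂ hz₁ hz₂ hG n
  have h := h₁ n
  rw [hsucc] at h
  have : G₁ * (1 - G₁) = z₁ * twoPointRatio z₁ G₁ z₂ G₂ * (1 - G₁ - conj (β n) * β n) :=
    mul_right_cancel₀ (hβ n) (by linear_combination h)
  rw [hsucc]
  field_simp
  linear_combination this

theorem norm_sq_eq (h₁ : RatioRelation β z₁ G₁) (h₂ : RatioRelation β z₂ G₂)
    (hβ : ∀ n, β n ≠ 0) (hz₁ : z₁ ≠ 0) (hz₂ : z₂ ≠ 0) (hG : G₁ ≠ G₂) (n : ℤ) :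
    ‖β n‖ ^ 2 = ‖(1 - G₁) * (twoPointRatio z₁ G₁ z₂ G₂ - G₁ / z₁)‖ := by
  have hsucc := h₁.succ_eq_twoPointRatio_mul h₂ hz₁ hz₂ hG
  set ρ := twoPointRatio z₁ G₁ z₂ G₂
  have hρ : ρ ≠ 0 := fun h0 => hβ (n + 1) (by rw [hsucc, h0, zero_mul])
  -- `conj (β m) * β (m + 1)` does not depend on `m`, hence neither does `‖β m‖`
  have hconst : ∀ m, conj (β m) * β (m + 1) = ρ * (‖β m‖ : ℂ) ^ 2 := fun m => by
    rw [hsucc, ← Complex.conj_mul']; ring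
  have hnorm : ‖β (n + 1)‖ = ‖β n‖ := by
    have := (hconst (n + 1)).symm.trans <| (h₁.conj_mul_succ_eq h₂ hβ hz₁ hz₂ hG (n + 1)).trans
      (h₁.conj_mul_succ_eq h₂ hβ hz₁ hz₂ hG n).symm |>.trans (hconst n)
    have := mul_left_cancel₀ hρ this
    exact (pow_left_inj₀ (norm_nonneg _) (norm_nonneg _) two_ne_zero).mp (by exact_mod_cast this)
  rw [← h₁.conj_mul_succ_eq h₂ hβ hz₁ hz₂ hG n, norm_mul, Complex.norm_conj, hnorm, sq]

end RatioRelation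

theorem exists_const_of_ratioRelation {P : (ℤ → ℂ) → Prop} {z₁ z₂ G₁ G₂ : ℂ} (hz : z₁ ≠ z₂)
    (hz₁ : z₁ ≠ 0) (hz₂ : z₂ ≠ 0) (hG₀ : G₁ ≠ 0) (hG₁ : G₁ ≠ 1) (hP : ∃ β, P β)
    (hbound : ∀ β, P β → ∀ n, ‖β n‖ ≤ 1)
    (hrel : ∀ β, P β → (∀ n, β n ≠ 0) ∧ RatioRelation β z₁ G₁ ∧ RatioRelation β z₂ G₂) :
    ∃ c : ℂ, c ≠ 0 ∧ ‖c‖ ≤ 1 ∧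
      ∀ β, P β → ∀ n, ‖β n‖ = Real.sqrt ‖c‖ ∧ conj (β (n + 1)) * β n = -c := by
  obtain ⟨β₀, hβ₀⟩ := hP
  obtain ⟨hne₀, h₁, h₂⟩ := hrel β₀ hβ₀
  have hG := h₁.ne_of_ne h₂ hne₀ hz hG₀ hG₁
  refine ⟨-conj ((1 - G₁) * (twoPointRatio z₁ G₁ z₂ G₂ - G₁ / z₁)), ?_, ?_, fun β hβ n => ?_⟩
  · rw [neg_ne_zero, _root_.map_ne_zero, ← h₁.conj_mul_succ_eq h₂ hne₀ hz₁ hz₂ hG 0]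
    exact mul_ne_zero (by simpa using hne₀ 0) (hne₀ _)
  · rw [norm_neg, Complex.norm_conj, ← h₁.norm_sq_eq h₂ hne₀ hz₁ hz₂ hG 0]
    exact pow_le_one₀ (norm_nonneg _) (hbound β₀ hβ₀ 0)
  · obtain ⟨hne, h₁, h₂⟩ := hrel β hβ
    refine ⟨?_, ?_⟩
    · rw [norm_neg, Complex.norm_conj, ← h₁.norm_sq_eq h₂ hne hz₁ hz₂ hG n,
        Real.sqrt_sq (norm_nonneg _)]
    · rw [neg_neg, ← h₁.conj_mul_succ_eq h₂ hne hz₁ hz₂ hG n, map_mul, Complex.conj_conj,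
        mul_comm]

theorem rightLimitRelations_of_tendsto_szego_ratio {Φ : ℕ → ℂ[X]} {α : ℕ → ℂ} {z G : ℂ}
    (hΦ0 : Φ 0 = 1) (hdeg : ∀ n, (Φ n).natDegree ≤ n)
    (hrec : ∀ n, Φ (n + 1) = X * Φ n - C (conj (α n)) * szegoRev n (Φ n))
    (hα : ∀ n, ‖α n‖ ≤ 1) (hz : ‖z‖ < 1)
    (hG : Tendsto (fun n => (szegoRev (n + 1) (Φ (n + 1))).eval z / (szegoRev n (Φ n)).eval z)
      atTop (𝓝 G)) :
    G ≠ 0 ∧ ∀ β, IsRightLimit α β → ∃ L, RightLimitRelations β L z G := by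
  have hp : ∀ n, (Φ (n + 1)).eval z =
      z * (Φ n).eval z - conj (α n) * (szegoRev n (Φ n)).eval z := fun n => by
    simp [hrec]
  have hq : ∀ n, (szegoRev (n + 1) (Φ (n + 1))).eval z =
      (szegoRev n (Φ n)).eval z - α n * z * (Φ n).eval z := fun n => by
    simp [hrec, szegoRev_szego_step (hdeg n), mul_assoc]
  have hp0 : (Φ 0).eval z = 1 := by simp [hΦ0]
  have hq0 : (szegoRev 0 (Φ 0)).eval z = 1 := by simp [hΦ0, szegoRev]
  obtain ⟨hb, hr, hbr⟩ :=
    schur_relations_of_szego_recursion (p := fun n => (Φ n).eval z)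
      (q := fun n => (szegoRev n (Φ n)).eval z) hα hz hp hq (by simp [hq0])
      (by simp only [hp0, hq0]; rfl)
  exact ⟨ne_zero_of_tendsto_one_sub_mul hα hb hz hr hG,
    fun β hβ => hβ.exists_rightLimitRelations hb hr hbr hG⟩

theorem statement19_general
    (μ : Measure ℝ)
    (Φ : ℕ → Polynomial ℂ) (α : ℕ → ℂ)
    (hV : IsVerblunsky μ Φ α) :
    (∀ z₀ ∈ ball (0:ℂ) 1, z₀ ≠ 0 →
      Tendsto (fun n =>
          (szegoRev (n + 1) (Φ (n + 1))).eval z₀ / (szegoRev n (Φ n)).eval z₀)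
        atTop (𝓝 1) →
      ∀ β : ℤ → ℂ, IsRightLimit α β → {n : ℤ | β n ≠ 0}.Subsingleton) ∧
    (∀ z₁ ∈ ball (0:ℂ) 1, ∀ z₂ ∈ ball (0:ℂ) 1, z₁ ≠ 0 → z₂ ≠ 0 → z₁ ≠ z₂ →
      ∀ G₁ G₂ : ℂ,
      Tendsto (fun n =>
          (szegoRev (n + 1) (Φ (n + 1))).eval z₁ / (szegoRev n (Φ n)).eval z₁)
        atTop (𝓝 G₁) →
      Tendsto (fun n =>
          (szegoRev (n + 1) (Φ (n + 1))).eval z₂ / (szegoRev n (Φ n)).eval z₂)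
        atTop (𝓝 G₂) →
      G₁ ≠ 1 → G₂ ≠ 1 →
      ∃ c : ℂ, c ≠ 0 ∧ ‖c‖ ≤ 1 ∧
        ∀ β : ℤ → ℂ, IsRightLimit α β → ∀ n : ℤ,
          ‖β n‖ = Real.sqrt (‖c‖) ∧
          (starRingEnd ℂ) (β (n + 1)) * β n = -c) := by
  obtain ⟨hmono, hdeg, -, hα, hrec⟩ := hV
  have hα' : ∀ n, ‖α n‖ ≤ 1 := fun n => (hα n).le
  have hlim {z : ℂ} (hz : z ∈ ball (0 : ℂ) 1) {G : ℂ} :=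
    rightLimitRelations_of_tendsto_szego_ratio (G := G) ((hmono 0).natDegree_eq_zero.mp (hdeg 0))
      (fun n => (hdeg n).le) hrec hα' (mem_ball_zero_iff.mp hz)
  refine ⟨fun z₀ hz₀ hz₀0 hG β hβ => ?_,
    fun z₁ hz₁ z₂ hz₂ hz₁0 hz₂0 hz G₁ G₂ hG₁ hG₂ hG₁1 hG₂1 => ?_⟩
  · obtain ⟨L, hL⟩ := (hlim hz₀ hG).2 β hβ
    exact hL.support_subsingleton hz₀0
  · refine exists_const_of_ratioRelation (G₂ := G₂) hz hz₁0 hz₂0 (hlim hz₁ hG₁).1 hG₁1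
      (exists_isRightLimit hα') (fun β hβ => hβ.norm_le hα') fun β hβ => ?_
    obtain ⟨L₁, hL₁⟩ := (hlim hz₁ hG₁).2 β hβ
    obtain ⟨L₂, hL₂⟩ := (hlim hz₂ hG₂).2 β hβ
    obtain ⟨hne, h₁⟩ := hL₁.ratioRelation hG₁1
    exact ⟨hne, h₁, (hL₂.ratioRelation hG₂1).2⟩

theorem statement19
    (μ : Measure ℝ) [IsProbabilityMeasure μ]
    (hμsupp : μ (Set.Ico 0 (2 * Real.pi))ᶜ = 0)
    (hμinf : ∀ F : Finset ℝ, μ (↑F : Set ℝ)ᶜ ≠ 0)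
    (Φ : ℕ → Polynomial ℂ) (α : ℕ → ℂ)
    (hV : IsVerblunsky μ Φ α) :
    (∀ z₀ ∈ ball (0:ℂ) 1, z₀ ≠ 0 →
      Tendsto (fun n =>
          (szegoRev (n + 1) (Φ (n + 1))).eval z₀ / (szegoRev n (Φ n)).eval z₀)
        atTop (𝓝 1) →
      ∀ β : ℤ → ℂ, IsRightLimit α β → {n : ℤ | β n ≠ 0}.Subsingleton) ∧
    (∀ z₁ ∈ ball (0:ℂ) 1, ∀ z₂ ∈ ball (0:ℂ) 1, z₁ ≠ 0 → z₂ ≠ 0 → z₁ ≠ z₂ →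
      ∀ G₁ G₂ : ℂ,
      Tendsto (fun n =>
          (szegoRev (n + 1) (Φ (n + 1))).eval z₁ / (szegoRev n (Φ n)).eval z₁)
        atTop (𝓝 G₁) →
      Tendsto (fun n =>
          (szegoRev (n + 1) (Φ (n + 1))).eval z₂ / (szegoRev n (Φ n)).eval z₂)
        atTop (𝓝 G₂) →
      G₁ ≠ 1 → G₂ ≠ 1 →
      ∃ c : ℂ, c ≠ 0 ∧ ‖c‖ ≤ 1 ∧
        ∀ β : ℤ → ℂ, IsRightLimit α β → ∀ n : ℤ,
          ‖β n‖ = Real.sqrt (‖c‖) ∧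
          (starRingEnd ℂ) (β (n + 1)) * β n = -c) :=
  statement19_general μ Φ α hV
end
end
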